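/- arXiv:2401.07116 — 4 statements merged into one kernel-verified Lean document; each statement's English description precedes it below -/
import Mathlib

section
/- Let k ≥ 7 and r ≥ 1 be integers, and let A = {a_1 < a_2 < ⋯ < a_k} be a set of k nonnegative integers with 0 ∈ A. If the set Σ(𝔸) of nonempty subsequence sums of the sequence 𝔸 = (a_1,…,a_k)_r satisfies |Σ(𝔸)| = 1 + r·k·(k−1)/2, then A = d∗[0,k−1] for some positive integer d. -/
open Finset Pointwise

/-- The set `Σ_α(𝔸)` of sums of subsequences with at least `α` terms of the sequence
in which every element of `A` is repeated exactly `r` times. -/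
def SubseqSums (r : ℕ) (A : Finset ℤ) (α : ℕ) : Set ℤ :=
  {x | ∃ lam : ℤ → ℕ, (∀ a, lam a ≤ r) ∧ (∀ a ∉ A, lam a = 0) ∧
    α ≤ (∑ a ∈ A, lam a) ∧ (∑ a ∈ A, (lam a : ℤ) * a) = x}

/-- Gauss number n(n+1)/2 as a sum. -/
def G (n : ℕ) : ℕ := ∑ i ∈ Finset.range (n+1), i

lemma G_succ (n : ℕ) : G (n+1) = G n + (n+1) := Finset.sum_range_succ _ _

lemma two_G (n : ℕ) : 2 * G n = n * (n+1) := by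
  induction n with
  | zero => simp [G]
  | succ m ih => rw [G_succ]; ring_nf; ring_nf at ih; omega

noncomputable def Qf (r : ℕ) (b : ℤ) : Finset ℤ :=
  (Finset.range (r+1)).image (fun t : ℕ => (t : ℤ) * b)

noncomputable def TS (r : ℕ) (B : Finset ℤ) : Finset ℤ := ∑ b ∈ B, Qf r b

lemma TS_empty (r : ℕ) : TS r ∅ = {0} := by
  simp [TS]; rfl

lemma TS_insert (r : ℕ) {x : ℤ} {B : Finset ℤ} (hx : x ∉ B) :
    TS r (insert x B) = Qf r x + TS r B := Finset.sum_insert hx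

lemma mem_TS_iff {r : ℕ} {B : Finset ℤ} {y : ℤ} :
    y ∈ TS r B ↔ ∃ f : ℤ → ℕ, (∀ b, f b ≤ r) ∧ y = ∑ b ∈ B, (f b : ℤ) * b := by
  classical
  induction B using Finset.induction_on generalizing y with
  | empty =>
    rw [TS_empty]
    simp only [Finset.mem_singleton, Finset.sum_empty]
    constructor
    · rintro rfl; exact ⟨fun _ => 0, fun _ => Nat.zero_le _, rfl⟩
    · rintro ⟨f, -, rfl⟩; rfl
  | @insert x B hx ih =>
    rw [TS_insert r hx]
    constructor
    · intro hy
      rw [Finset.mem_add] at hy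
      obtain ⟨u, hu, v, hv, huv⟩ := hy
      obtain ⟨t, ht, rfl⟩ := Finset.mem_image.1 hu
      obtain ⟨f, hf, rfl⟩ := ih.1 hv
      have ht' : t ≤ r := Nat.lt_succ_iff.1 (Finset.mem_range.1 ht)
      refine ⟨fun z => if z = x then t else f z, ?_, ?_⟩
      · intro b; by_cases hb : b = x <;> simp [hb, hf, ht']
      · rw [← huv, Finset.sum_insert hx]
        congr 1
        · simp
        · apply Finset.sum_congr rfl
          intro b hb
          have hbx : b ≠ x := fun h => hx (h ▸ hb)
          simp [hbx]
    · rintro ⟨f, hf, rfl⟩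
      rw [Finset.mem_add]
      refine ⟨(f x : ℤ) * x, ?_, ∑ b ∈ B, (f b : ℤ) * b, ?_, ?_⟩
      · exact Finset.mem_image.2 ⟨f x, Finset.mem_range.2 (Nat.lt_succ_of_le (hf x)), rfl⟩
      · exact ih.2 ⟨f, hf, rfl⟩
      · rw [Finset.sum_insert hx]

lemma TS_nonneg {r : ℕ} {B : Finset ℤ} (hB : ∀ b ∈ B, 0 ≤ b) {y : ℤ} (hy : y ∈ TS r B) :
    0 ≤ y := by
  obtain ⟨f, hf, rfl⟩ := mem_TS_iff.1 hy
  exact Finset.sum_nonneg fun b hb => mul_nonneg (Int.natCast_nonneg _) (hB b hb)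

lemma TS_le {r : ℕ} {B : Finset ℤ} (hB : ∀ b ∈ B, 0 ≤ b) {y : ℤ} (hy : y ∈ TS r B) :
    y ≤ (r : ℤ) * ∑ b ∈ B, b := by
  obtain ⟨f, hf, rfl⟩ := mem_TS_iff.1 hy
  rw [Finset.mul_sum]
  exact Finset.sum_le_sum fun b hb =>
    mul_le_mul_of_nonneg_right (by exact_mod_cast hf b) (hB b hb)

lemma zero_mem_TS {r : ℕ} {B : Finset ℤ} : (0 : ℤ) ∈ TS r B :=
  mem_TS_iff.2 ⟨fun _ => 0, fun _ => Nat.zero_le _, by simp⟩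

/-- an element of the top chain: full sum minus one copy of `w` (or minus nothing if `w = 0`). -/
lemma M_sub_mem_TS {r : ℕ} (hr : 1 ≤ r) {B : Finset ℤ} {w : ℤ}
    (hw : w ∈ insert (0:ℤ) B) (h0 : (0:ℤ) ∉ B) :
    (r : ℤ) * (∑ b ∈ B, b) - w ∈ TS r B := by
  classical
  refine mem_TS_iff.2 ⟨fun z => if z = w then r - 1 else r, fun b => by dsimp; split <;> omega, ?_⟩
  have key : ∀ b ∈ B, ((if b = w then r - 1 else r : ℕ) : ℤ) * b
      = (r : ℤ) * b - (if b = w then b else 0) := by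
    intro b hb
    by_cases h : b = w <;> simp [h]
    push_cast [hr]
    ring
  rw [Finset.sum_congr rfl key, Finset.sum_sub_distrib, ← Finset.mul_sum]
  have : (∑ x ∈ B, if x = w then x else 0) = (if w ∈ B then w else 0) := by
    rw [Finset.sum_ite_eq' B w (fun x => x)]
  rw [this]
  rcases Finset.mem_insert.1 hw with h | h
  · subst h
    simp [h0]
  · simp [h]

/-- new-chain finset for the step from `B` to `insert x B`. -/
noncomputable def NC (r : ℕ) (x : ℤ) (B : Finset ℤ) : Finset ℤ :=
  ((Finset.Icc 1 r) ×ˢ (insert (0:ℤ) B)).image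
    (fun p => (p.1 : ℤ) * x + (r : ℤ) * (∑ b ∈ B, b) - p.2)

lemma mem_NC_iff {r : ℕ} {x y : ℤ} {B : Finset ℤ} :
    y ∈ NC r x B ↔ ∃ t : ℕ, 1 ≤ t ∧ t ≤ r ∧ ∃ w ∈ insert (0:ℤ) B,
      y = (t : ℤ) * x + (r : ℤ) * (∑ b ∈ B, b) - w := by
  unfold NC
  simp only [Finset.mem_image, Finset.mem_product, Finset.mem_Icc, Prod.exists]
  constructor
  · rintro ⟨t, w, ⟨⟨h1, h2⟩, hw⟩, rfl⟩; exact ⟨t, h1, h2, w, hw, rfl⟩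
  · rintro ⟨t, h1, h2, w, hw, rfl⟩; exact ⟨t, w, ⟨⟨h1, h2⟩, hw⟩, rfl⟩

lemma TS_subset_insert (r : ℕ) {x : ℤ} {B : Finset ℤ} (hx : x ∉ B) :
    TS r B ⊆ TS r (insert x B) := by
  intro y hy
  rw [TS_insert r hx, Finset.mem_add]
  exact ⟨0, Finset.mem_image.2 ⟨0, Finset.mem_range.2 (Nat.succ_pos r), by simp⟩, y, hy, zero_add y⟩

theorem step_struct {r : ℕ} (hr : 1 ≤ r) {B : Finset ℤ} {x : ℤ}
    (hB : ∀ b ∈ B, 0 < b) (hxB : ∀ b ∈ B, b < x) (hx0 : 0 < x) :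
    (NC r x B).card = r * (B.card + 1) ∧
    Disjoint (TS r B) (NC r x B) ∧
    TS r B ∪ NC r x B ⊆ TS r (insert x B) := by
  classical
  have h0B : (0:ℤ) ∉ B := fun h => lt_irrefl 0 (hB 0 h)
  have hxB' : x ∉ B := fun h => lt_irrefl x (hxB x h)
  have hwlt : ∀ w ∈ insert (0:ℤ) B, 0 ≤ w ∧ w < x := by
    intro w hw
    rcases Finset.mem_insert.1 hw with h | h
    · exact ⟨le_of_eq h.symm, h ▸ hx0⟩
    · exact ⟨(hB w h).le, hxB w h⟩
  set M : ℤ := (r : ℤ) * ∑ b ∈ B, b with hM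
  have hMnn : 0 ≤ M := mul_nonneg (Int.natCast_nonneg _)
    (Finset.sum_nonneg fun b hb => (hB b hb).le)
  have hNgt : ∀ y ∈ NC r x B, M < y := by
    intro y hy
    obtain ⟨t, ht1, _, w, hw, rfl⟩ := mem_NC_iff.1 hy
    have := (hwlt w hw).2
    have htx : x ≤ (t:ℤ) * x := le_mul_of_one_le_left hx0.le (by exact_mod_cast ht1)
    omega
  refine ⟨?_, ?_, ?_⟩
  · rw [NC, Finset.card_image_of_injOn, Finset.card_product, Nat.card_Icc,
      Finset.card_insert_of_notMem h0B]
    · simp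
    · rintro ⟨t, w⟩ htw ⟨t', w'⟩ htw' he
      simp only [Finset.mem_coe, Finset.mem_product, Finset.mem_Icc] at htw htw'
      have hw := hwlt w htw.2
      have hw' := hwlt w' htw'.2
      simp only at he
      have hkey : ((t:ℤ) - t') * x = w - w' := by linear_combination he
      have : (t:ℤ) = t' := by
        rcases lt_trichotomy (t:ℤ) (t':ℤ) with h | h | h
        · have h1 : (1:ℤ) ≤ (t':ℤ) - t := by omega
          have := le_mul_of_one_le_left hx0.le h1
          nlinarith [hkey]
        · exact h
        · have h1 : (1:ℤ) ≤ (t:ℤ) - t' := by omega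
          have := le_mul_of_one_le_left hx0.le h1
          nlinarith [hkey]
      have ht : t = t' := by exact_mod_cast this
      subst ht
      have : w = w' := by omega
      simp [this]
  · rw [Finset.disjoint_left]
    intro y hy hyN
    exact absurd (TS_le (fun b hb => (hB b hb).le) hy) (not_le.2 (hNgt y hyN))
  · intro y hy
    rcases Finset.mem_union.1 hy with h | h
    · exact TS_subset_insert r hxB' h
    · obtain ⟨t, ht1, ht2, w, hw, rfl⟩ := mem_NC_iff.1 h
      rw [TS_insert r hxB', Finset.mem_add]
      refine ⟨(t:ℤ) * x, ?_, M - w, M_sub_mem_TS hr hw h0B, by ring⟩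
      exact Finset.mem_image.2 ⟨t, Finset.mem_range.2 (Nat.lt_succ_of_le ht2), rfl⟩

lemma step_card {r : ℕ} (hr : 1 ≤ r) {B : Finset ℤ} {x : ℤ}
    (hB : ∀ b ∈ B, 0 < b) (hxB : ∀ b ∈ B, b < x) (hx0 : 0 < x) :
    (TS r B).card + r * (B.card + 1) ≤ (TS r (insert x B)).card := by
  obtain ⟨hcard, hdisj, hsub⟩ := step_struct hr hB hxB hx0
  calc (TS r B).card + r * (B.card + 1) = (TS r B ∪ NC r x B).card := by
        rw [Finset.card_union_of_disjoint hdisj, hcard]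
    _ ≤ _ := Finset.card_le_card hsub

theorem TS_lower_bound {r : ℕ} (hr : 1 ≤ r) :
    ∀ n (B : Finset ℤ), (∀ b ∈ B, 0 < b) → B.card = n →
      1 + r * G n ≤ (TS r B).card := by
  intro n
  induction n with
  | zero =>
    intro B _ hc
    rw [Finset.card_eq_zero.1 hc, TS_empty]
    simp [G]
  | succ m ih =>
    intro B hB hc
    have hne : B.Nonempty := Finset.card_pos.1 (hc ▸ Nat.succ_pos m)
    set x := B.max' hne with hx
    have hxB : x ∈ B := B.max'_mem hne
    have hB' : ∀ b ∈ B.erase x, 0 < b := fun b hb => hB b (Finset.mem_of_mem_erase hb)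
    have hlt : ∀ b ∈ B.erase x, b < x := fun b hb =>
      lt_of_le_of_ne (B.le_max' b (Finset.mem_of_mem_erase hb)) (Finset.ne_of_mem_erase hb)
    have hcard' : (B.erase x).card = m := by
      rw [Finset.card_erase_of_mem hxB, hc]; omega
    have hx0 : 0 < x := hB x hxB
    have := step_card hr hB' hlt hx0
    rw [Finset.insert_erase hxB] at this
    have h2 := ih (B.erase x) hB' hcard'
    rw [G_succ, Nat.mul_add]
    rw [hcard'] at this
    omega

/-- heredity: equality propagates to the erase-max subset, along with the structure. -/
theorem hered {r : ℕ} (hr : 1 ≤ r) {B : Finset ℤ} (hne : B.Nonempty)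
    (hB : ∀ b ∈ B, 0 < b)
    (heq : (TS r B).card = 1 + r * G B.card) :
    (TS r (B.erase (B.max' hne))).card = 1 + r * G (B.card - 1) ∧
    TS r B = TS r (B.erase (B.max' hne)) ∪ NC r (B.max' hne) (B.erase (B.max' hne)) := by
  set x := B.max' hne with hx
  have hxB : x ∈ B := B.max'_mem hne
  have hB' : ∀ b ∈ B.erase x, 0 < b := fun b hb => hB b (Finset.mem_of_mem_erase hb)
  have hlt : ∀ b ∈ B.erase x, b < x := fun b hb =>
    lt_of_le_of_ne (B.le_max' b (Finset.mem_of_mem_erase hb)) (Finset.ne_of_mem_erase hb)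
  have hx0 : 0 < x := hB x hxB
  have hcard' : (B.erase x).card = B.card - 1 := Finset.card_erase_of_mem hxB
  have hpos : 1 ≤ B.card := Finset.card_pos.2 hne
  obtain ⟨hNcard, hdisj, hsub⟩ := step_struct hr hB' hlt hx0
  rw [Finset.insert_erase hxB] at hsub
  have hLB := TS_lower_bound hr (B.card - 1) (B.erase x) hB' hcard'
  have hc1 : B.card - 1 + 1 = B.card := by omega
  have hGs : G B.card = G (B.card - 1) + B.card := by
    have h := G_succ (B.card - 1)
    rw [hc1] at h
    omega
  have hUcard : (TS r (B.erase x) ∪ NC r x (B.erase x)).card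
      = (TS r (B.erase x)).card + r * B.card := by
    rw [Finset.card_union_of_disjoint hdisj, hNcard, hcard', hc1]
  have hle : (TS r B).card ≤ (TS r (B.erase x) ∪ NC r x (B.erase x)).card := by
    rw [hUcard, heq, hGs, Nat.mul_add]
    omega
  have hEq : TS r (B.erase x) ∪ NC r x (B.erase x) = TS r B :=
    Finset.eq_of_subset_of_card_le hsub hle
  constructor
  · have h1 : (TS r B).card = (TS r (B.erase x)).card + r * B.card := by
      rw [← hEq, hUcard]
    rw [heq, hGs, Nat.mul_add] at h1
    omega
  · exact hEq.symm

lemma mem_Qf_iff {r : ℕ} {b y : ℤ} : y ∈ Qf r b ↔ ∃ t : ℕ, t ≤ r ∧ y = (t:ℤ) * b := by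
  unfold Qf
  simp only [Finset.mem_image, Finset.mem_range, Nat.lt_succ_iff]
  constructor
  · rintro ⟨t, ht, rfl⟩; exact ⟨t, ht, rfl⟩
  · rintro ⟨t, ht, rfl⟩; exact ⟨t, ht, rfl⟩

/-- `{0,c,…,rc} + [0,m] = [0, rc+m]` when `1 ≤ c ≤ m+1`. -/
lemma Qf_add_Icc (r : ℕ) {c m : ℤ} (hc : 1 ≤ c) (hm : c ≤ m + 1) :
    Qf r c + Finset.Icc (0:ℤ) m = Finset.Icc (0:ℤ) ((r:ℤ) * c + m) := by
  induction r with
  | zero =>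
    ext y
    simp only [Finset.mem_add, mem_Qf_iff, Finset.mem_Icc]
    constructor
    · rintro ⟨u, ⟨t, ht, rfl⟩, v, hv, rfl⟩
      interval_cases t
      · simpa using hv
    · intro hy
      exact ⟨0, ⟨0, le_refl _, by simp⟩, y, by simpa using hy, by simp⟩
  | succ s ih =>
    have hQ : Qf (s+1) c = insert (((s:ℤ)+1) * c) (Qf s c) := by
      ext y
      simp only [mem_Qf_iff, Finset.mem_insert]
      constructor
      · rintro ⟨t, ht, rfl⟩
        rcases Nat.lt_or_ge t (s+1) with h | h
        · exact Or.inr ⟨t, Nat.lt_succ_iff.1 h, rfl⟩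
        · left; have : t = s + 1 := le_antisymm ht h; subst this; push_cast; ring
      · rintro (rfl | ⟨t, ht, rfl⟩)
        · exact ⟨s+1, le_refl _, by push_cast; ring⟩
        · exact ⟨t, Nat.le_succ_of_le ht, rfl⟩
    rw [hQ, Finset.insert_eq, Finset.union_add, Finset.singleton_add, ih]
    have hs : (((s:ℤ)+1) * c) +ᵥ Finset.Icc (0:ℤ) m
        = Finset.Icc (((s:ℤ)+1) * c) (((s:ℤ)+1) * c + m) := by
      ext y
      simp only [Finset.mem_vadd_finset, Finset.mem_Icc, vadd_eq_add]
      constructor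
      · rintro ⟨v, hv, rfl⟩; omega
      · intro hy; exact ⟨y - ((s:ℤ)+1)*c, by omega, by ring⟩
    rw [hs]
    ext y
    simp only [Finset.mem_union, Finset.mem_Icc]
    have h4 : ((s:ℤ)+1) * c = (s:ℤ)*c + c := by ring
    have h5 : (0:ℤ) ≤ (s:ℤ)*c := by positivity
    have h6 : ((s+1:ℕ):ℤ) * c = (s:ℤ)*c + c := by push_cast; ring
    rw [h6, h4]
    omega

/-- equivariance of TS under multiplication. -/
lemma TS_smul (r : ℕ) (d : ℤ) (hd : d ≠ 0) :
    ∀ C : Finset ℤ, TS r (C.image (fun i => d * i)) = (TS r C).image (fun i => d * i) := by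
  intro C
  induction C using Finset.induction_on with
  | empty => rw [Finset.image_empty, TS_empty]; simp
  | @insert x B hx ih =>
    have hdx : d * x ∉ B.image (fun i => d * i) := by
      rw [Finset.mem_image]
      rintro ⟨b, hb, he⟩
      exact hx ((mul_left_cancel₀ hd he) ▸ hb)
    rw [Finset.image_insert, TS_insert r hdx, TS_insert r hx, ih]
    have hQ : Qf r (d * x) = (Qf r x).image (fun i => d * i) := by
      ext y
      simp only [mem_Qf_iff, Finset.mem_image]
      constructor
      · rintro ⟨t, ht, rfl⟩; exact ⟨(t:ℤ)*x, ⟨t, ht, rfl⟩, by ring⟩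
      · rintro ⟨z, ⟨t, ht, rfl⟩, rfl⟩; exact ⟨t, ht, by ring⟩
    rw [hQ]
    ext y
    simp only [Finset.mem_add, Finset.mem_image]
    constructor
    · rintro ⟨u, ⟨a, ha, rfl⟩, v, ⟨b, hb, rfl⟩, rfl⟩
      exact ⟨a + b, ⟨a, ha, b, hb, rfl⟩, by ring⟩
    · rintro ⟨z, ⟨a, ha, b, hb, rfl⟩, rfl⟩
      exact ⟨d*a, ⟨a, ha, rfl⟩, d*b, ⟨b, hb, rfl⟩, by ring⟩

lemma G_ge (j : ℕ) : j ≤ G j := by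
  induction j with
  | zero => simp [G]
  | succ m ih => rw [G_succ]; omega

/-- TS of the interval [1,j] with multiplicity r. -/
lemma TS_Icc (r : ℕ) (hr : 1 ≤ r) : ∀ j : ℕ,
    TS r (Finset.Icc (1:ℤ) (j:ℤ)) = Finset.Icc (0:ℤ) ((r * G j : ℕ) : ℤ) := by
  intro j
  induction j with
  | zero =>
    have h0 : Finset.Icc (1:ℤ) ((0:ℕ):ℤ) = ∅ := by norm_num
    rw [h0, TS_empty]
    have h1 : (r * G 0 : ℕ) = 0 := by simp [G]
    rw [h1]
    simp
  | succ m ih =>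
    have hins : Finset.Icc (1:ℤ) ((m+1:ℕ):ℤ) = insert ((m:ℤ)+1) (Finset.Icc (1:ℤ) (m:ℤ)) := by
      ext y
      simp only [Finset.mem_insert, Finset.mem_Icc]
      push_cast
      omega
    have hnm : ((m:ℤ)+1) ∉ Finset.Icc (1:ℤ) (m:ℤ) := by simp
    rw [hins, TS_insert r hnm, ih]
    have hc1 : (1:ℤ) ≤ (m:ℤ)+1 := by omega
    have hc2 : (m:ℤ)+1 ≤ ((r * G m : ℕ):ℤ) + 1 := by
      have h1 : m ≤ G m := G_ge m
      have h2 : G m ≤ r * G m := Nat.le_mul_of_pos_left _ hr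
      have : m ≤ r * G m := le_trans h1 h2
      omega
    rw [Qf_add_Icc r hc1 hc2]
    congr 1
    have : r * G (m+1) = r * G m + r * (m+1) := by rw [G_succ, Nat.mul_add]
    rw [this]
    push_cast
    ring

lemma sum_Icc_id : ∀ j : ℕ, ∑ i ∈ Finset.Icc (1:ℤ) (j:ℤ), i = ((G j : ℕ) : ℤ) := by
  intro j
  induction j with
  | zero => simp [G]
  | succ m ih =>
    have hins : Finset.Icc (1:ℤ) ((m+1:ℕ):ℤ) = insert ((m:ℤ)+1) (Finset.Icc (1:ℤ) (m:ℤ)) := by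
      ext y; simp only [Finset.mem_insert, Finset.mem_Icc]; push_cast; omega
    rw [hins, Finset.sum_insert (by simp), ih, G_succ]
    push_cast
    ring

lemma j_lt_rG {r j : ℕ} (hr : 1 ≤ r) (hj : 1 ≤ j) (hcond : 2 ≤ r ∨ 2 ≤ j) :
    j < r * G j := by
  rcases hcond with h | h
  · have h1 : j ≤ G j := G_ge j
    have h2 : 1 ≤ G j := le_trans hj h1
    calc j < 2 * G j := by omega
      _ ≤ r * G j := Nat.mul_le_mul_right _ h
  · obtain ⟨m, rfl⟩ : ∃ m, j = m + 1 := ⟨j - 1, by omega⟩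
    have h1 : m ≤ G m := G_ge m
    have h2 : m + 1 < G (m+1) := by rw [G_succ]; omega
    calc m + 1 < G (m+1) := h2
      _ ≤ r * G (m+1) := Nat.le_mul_of_pos_left _ hr

theorem STEP {r j : ℕ} {d x : ℤ} (hr : 1 ≤ r) (hd : 0 < d) (hj : 1 ≤ j)
    (hcond : 2 ≤ r ∨ 2 ≤ j)
    (hx : d * (j:ℤ) < x)
    (heq : (TS r (insert x ((Finset.Icc (1:ℤ) (j:ℤ)).image (fun i => d * i)))).card
      = 1 + r * G j + r * (j+1)) :
    x = d * ((j:ℤ)+1) := by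
  classical
  set Bj := (Finset.Icc (1:ℤ) (j:ℤ)).image (fun i => d * i) with hBj
  have hdne : d ≠ 0 := hd.ne'
  have hinj : Function.Injective (fun i : ℤ => d * i) := fun a b h => by
    exact mul_left_cancel₀ hdne h
  have hBj_pos : ∀ b ∈ Bj, 0 < b := by
    intro b hb
    obtain ⟨i, hi, rfl⟩ := Finset.mem_image.1 hb
    have := (Finset.mem_Icc.1 hi).1
    positivity
  have hBj_le : ∀ b ∈ Bj, b ≤ d * (j:ℤ) := by
    intro b hb
    obtain ⟨i, hi, rfl⟩ := Finset.mem_image.1 hb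
    exact mul_le_mul_of_nonneg_left (Finset.mem_Icc.1 hi).2 hd.le
  have hBj_lt : ∀ b ∈ Bj, b < x := fun b hb => lt_of_le_of_lt (hBj_le b hb) hx
  have hx0 : 0 < x := by
    have : (0:ℤ) < d * (j:ℤ) := by positivity
    omega
  have hxB : x ∉ Bj := fun h => lt_irrefl x (hBj_lt x h)
  have hTSBj : TS r Bj = (Finset.Icc (0:ℤ) ((r * G j : ℕ):ℤ)).image (fun i => d * i) := by
    rw [hBj, TS_smul r d hdne, TS_Icc r hr]
  have hsumBj : ∑ b ∈ Bj, b = d * ((G j : ℕ):ℤ) := by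
    rw [hBj, Finset.sum_image (fun a _ b _ h => hinj h), ← Finset.mul_sum, sum_Icc_id j]
  have hBjcard : Bj.card = j := by
    rw [hBj, Finset.card_image_of_injective _ hinj, Int.card_Icc]
    simp
  have hTSBjcard : (TS r Bj).card = r * G j + 1 := by
    rw [hTSBj, Finset.card_image_of_injective _ hinj, Int.card_Icc]
    omega
  obtain ⟨hNcard, hdisj, hsub⟩ := step_struct hr hBj_pos hBj_lt hx0
  have hUcard : (TS r Bj ∪ NC r x Bj).card = 1 + r * G j + r * (j+1) := by
    rw [Finset.card_union_of_disjoint hdisj, hNcard, hTSBjcard, hBjcard]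
    ring
  have hEq : TS r Bj ∪ NC r x Bj = TS r (insert x Bj) :=
    Finset.eq_of_subset_of_card_le hsub (by rw [heq, hUcard])
  have hxmem : x ∈ TS r (insert x Bj) := by
    refine mem_TS_iff.2 ⟨fun z => if z = x then 1 else 0, ?_, ?_⟩
    · intro b; dsimp only; split <;> omega
    · rw [Finset.sum_insert hxB]
      dsimp only
      rw [if_pos rfl]
      rw [Finset.sum_eq_zero (fun b hb => by
        have hbx : b ≠ x := fun h => hxB (h ▸ hb)
        simp [hbx])]
      simp
  rw [← hEq, Finset.mem_union] at hxmem
  have hjrG : j < r * G j := j_lt_rG hr hj hcond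
  have hjrG' : d * (j:ℤ) < d * ((r * G j : ℕ):ℤ) := by
    have : ((j:ℕ):ℤ) < ((r * G j : ℕ):ℤ) := by exact_mod_cast hjrG
    exact mul_lt_mul_of_pos_left this hd
  -- x cannot be in the new chain
  have hxTS : x ∈ TS r Bj := by
    rcases hxmem with h | h
    · exact h
    · exfalso
      obtain ⟨t, ht1, ht2, w, hw, hxe⟩ := mem_NC_iff.1 h
      have hwle : 0 ≤ w ∧ w ≤ d * (j:ℤ) := by
        rcases Finset.mem_insert.1 hw with h' | h'
        · subst h'; exact ⟨le_refl 0, by positivity⟩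
        · exact ⟨(hBj_pos w h').le, hBj_le w h'⟩
      have hM : (r:ℤ) * (∑ b ∈ Bj, b) = d * ((r * G j:ℕ):ℤ) := by
        rw [hsumBj]; push_cast; ring
      rw [hM] at hxe
      rcases Nat.lt_or_ge t 2 with h2 | h2
      · have : t = 1 := by omega
        subst this
        simp only [Nat.cast_one, one_mul] at hxe
        omega
      · have hx1 : x ≤ ((t:ℤ) - 1) * x := by
          have h1 : (1:ℤ) ≤ (t:ℤ) - 1 := by exact_mod_cast Nat.le_sub_one_of_lt h2
          exact le_mul_of_one_le_left hx0.le h1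
        nlinarith [hxe, hwle.1, hwle.2, hjrG']
  -- hence x = d * c
  rw [hTSBj, Finset.mem_image] at hxTS
  obtain ⟨c, hc, rfl⟩ := hxTS
  rw [Finset.mem_Icc] at hc
  have hcj : (j:ℤ) < c := lt_of_mul_lt_mul_left hx hd.le
  -- now compute the full cardinality
  have hcIcc : c ∉ Finset.Icc (1:ℤ) (j:ℤ) := by
    rw [Finset.mem_Icc]; omega
  have hins : insert (d * c) Bj = (insert c (Finset.Icc (1:ℤ) (j:ℤ))).image (fun i => d * i) := by
    rw [Finset.image_insert]
  have hTSi : TS r (insert (d*c) Bj)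
      = (Finset.Icc (0:ℤ) ((r:ℤ) * c + ((r * G j : ℕ):ℤ))).image (fun i => d * i) := by
    rw [hins, TS_smul r d hdne, TS_insert r hcIcc, TS_Icc r hr,
      Qf_add_Icc r (by omega : (1:ℤ) ≤ c) (by omega : c ≤ ((r * G j : ℕ):ℤ) + 1)]
  have hfin : (r:ℤ) * c + ((r * G j : ℕ):ℤ) + 1 = ((1 + r * G j + r * (j+1) : ℕ):ℤ) := by
    have h1 : (TS r (insert (d*c) Bj)).card = ((r:ℤ) * c + ((r * G j:ℕ):ℤ) + 1).toNat := by
      rw [hTSi, Finset.card_image_of_injective _ hinj, Int.card_Icc]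
      congr 1
      ring
    rw [h1] at heq
    have hnn : (0:ℤ) ≤ (r:ℤ) * c := mul_nonneg (by positivity) hc.1
    omega
  have hrc : (r:ℤ) * c = (r:ℤ) * ((j:ℤ)+1) := by push_cast at hfin; linarith
  have hceq : c = (j:ℤ) + 1 := by
    have hr0 : (r:ℤ) ≠ 0 := Int.natCast_ne_zero.2 (by omega)
    exact mul_left_cancel₀ hr0 hrc
  rw [hceq]

lemma single_mem_TS {r : ℕ} (hr : 1 ≤ r) {B : Finset ℤ} {x : ℤ} (hx : x ∈ B) :
    x ∈ TS r B := by
  classical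
  refine mem_TS_iff.2 ⟨fun z => if z = x then 1 else 0, fun b => by dsimp only; split <;> omega, ?_⟩
  have key : ∀ b ∈ B, ((if b = x then 1 else 0 : ℕ) : ℤ) * b = if b = x then b else 0 := by
    intro b _; by_cases h : b = x <;> simp [h]
  rw [Finset.sum_congr rfl key]
  have : (∑ b ∈ B, if b = x then b else 0) = if x ∈ B then x else 0 :=
    Finset.sum_ite_eq' B x (fun z => z)
  rw [this, if_pos hx]

lemma pair_mem_TS {r : ℕ} (hr : 1 ≤ r) {B : Finset ℤ} {x y : ℤ}
    (hx : x ∈ B) (hy : y ∈ B) (hxy : x ≠ y) : x + y ∈ TS r B := by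
  classical
  refine mem_TS_iff.2 ⟨fun z => if z = x ∨ z = y then 1 else 0,
    fun b => by dsimp only; split <;> omega, ?_⟩
  have key : ∀ b ∈ B, ((if b = x ∨ b = y then 1 else 0 : ℕ) : ℤ) * b
      = (if b = x then b else 0) + (if b = y then b else 0) := by
    intro b _
    by_cases h1 : b = x
    · subst h1; simp [hxy]
    · by_cases h2 : b = y
      · subst h2; simp [h1]
      · simp [h1, h2]
  rw [Finset.sum_congr rfl key, Finset.sum_add_distrib]
  have e1 : (∑ b ∈ B, if b = x then b else 0) = if x ∈ B then x else 0 :=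
    Finset.sum_ite_eq' B x (fun z => z)
  have e2 : (∑ b ∈ B, if b = y then b else 0) = if y ∈ B then y else 0 :=
    Finset.sum_ite_eq' B y (fun z => z)
  rw [e1, e2, if_pos hx, if_pos hy]

lemma NC1_unpack {x y : ℤ} {B : Finset ℤ} (hy : y ∈ NC 1 x B) :
    ∃ w ∈ insert (0:ℤ) B, y = x + (∑ b ∈ B, b) - w := by
  obtain ⟨t, ht1, ht2, w, hw, he⟩ := mem_NC_iff.1 hy
  have : t = 1 := le_antisymm ht2 ht1
  subst this
  simp only [Nat.cast_one, one_mul] at he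
  exact ⟨w, hw, he⟩

lemma TS1_pair_mem {a b y : ℤ} (hab : a ≠ b)
    (hy : y ∈ TS 1 (insert b {a})) : y = 0 ∨ y = a ∨ y = b ∨ y = a + b := by
  obtain ⟨f, hf, rfl⟩ := mem_TS_iff.1 hy
  rw [Finset.sum_insert (by simp [Ne.symm hab]), Finset.sum_singleton]
  have h1 := hf a
  have h2 := hf b
  interval_cases h3 : f a <;> interval_cases h4 : f b <;> simp [h3, h4] <;> omega

theorem base4 {B : Finset ℤ} (hB : ∀ z ∈ B, 0 < z) (hcard : B.card = 4)
    (heq : (TS 1 B).card = 1 + 1 * G B.card) :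
    ∃ d : ℤ, 0 < d ∧ B = (Finset.Icc (1:ℤ) ((4:ℕ):ℤ)).image (fun i => d * i) := by
  classical
  have hne : B.Nonempty := Finset.card_pos.1 (by omega)
  set e := B.max' hne with he_def
  have heB : e ∈ B := B.max'_mem hne
  set B3 := B.erase e with hB3_def
  have hcard3 : B3.card = 3 := by rw [hB3_def, Finset.card_erase_of_mem heB, hcard]
  have hne3 : B3.Nonempty := Finset.card_pos.1 (by omega)
  set c := B3.max' hne3 with hc_def
  have hcB3 : c ∈ B3 := B3.max'_mem hne3
  set B2 := B3.erase c with hB2_def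
  have hcard2 : B2.card = 2 := by rw [hB2_def, Finset.card_erase_of_mem hcB3, hcard3]
  have hne2 : B2.Nonempty := Finset.card_pos.1 (by omega)
  set b := B2.max' hne2 with hb_def
  have hbB2 : b ∈ B2 := B2.max'_mem hne2
  set B1 := B2.erase b with hB1_def
  have hcard1 : B1.card = 1 := by rw [hB1_def, Finset.card_erase_of_mem hbB2, hcard2]
  obtain ⟨a, ha⟩ := Finset.card_eq_one.1 hcard1
  have haB1 : a ∈ B1 := by rw [ha]; exact Finset.mem_singleton_self a
  -- memberships and order
  have haB2 : a ∈ B2 := Finset.mem_of_mem_erase haB1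
  have hbB3 : b ∈ B3 := Finset.mem_of_mem_erase hbB2
  have haB3 : a ∈ B3 := Finset.mem_of_mem_erase haB2
  have hcB : c ∈ B := Finset.mem_of_mem_erase hcB3
  have hbB : b ∈ B := Finset.mem_of_mem_erase hbB3
  have haB : a ∈ B := Finset.mem_of_mem_erase haB3
  have hab : a < b := lt_of_le_of_ne (B2.le_max' a haB2) (Finset.ne_of_mem_erase haB1)
  have hbc : b < c := lt_of_le_of_ne (B3.le_max' b hbB3) (Finset.ne_of_mem_erase hbB2)
  have hce : c < e := lt_of_le_of_ne (B.le_max' c hcB) (Finset.ne_of_mem_erase hcB3)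
  have ha0 : 0 < a := hB a haB
  -- representations
  have hB2repr : B2 = insert b {a} := by
    rw [← ha, hB1_def, Finset.insert_erase hbB2]
  have hB3repr : B3 = insert c B2 := by rw [hB2_def, Finset.insert_erase hcB3]
  have hBrepr : B = insert e B3 := by rw [hB3_def, Finset.insert_erase heB]
  -- sums
  have hsum2 : ∑ z ∈ B2, z = a + b := by
    rw [hB2repr, Finset.sum_insert (by simp; omega), Finset.sum_singleton]; ring
  have hsum3 : ∑ z ∈ B3, z = a + b + c := by
    rw [hB3repr, Finset.sum_insert (by rw [hB2repr]; simp; omega), hsum2]; ring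
  -- heredity twice
  have hB3pos : ∀ z ∈ B3, 0 < z := fun z hz => hB z (Finset.mem_of_mem_erase hz)
  obtain ⟨hcard_ts3, hdecomp4⟩ := hered (le_refl 1) hne hB heq
  have heq3 : (TS 1 B3).card = 1 + 1 * G B3.card := by
    have h' : (TS 1 B3).card = 1 + 1 * G (B.card - 1) := hcard_ts3
    rw [h', hcard3, hcard]
  obtain ⟨hcard_ts2, hdecomp3⟩ := hered (le_refl 1) hne3 hB3pos heq3
  -- membership conversion helpers
  have conv3 : ∀ y ∈ TS 1 B3,
      (y = 0 ∨ y = a ∨ y = b ∨ y = a + b) ∨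
      (y = c + (a + b) ∨ y = c + b ∨ y = c + a) := by
    intro y hy
    rw [hdecomp3] at hy
    rcases Finset.mem_union.1 hy with h | h
    · have h' : y ∈ TS 1 (insert b {a}) := by rw [← hB2repr]; exact h
      exact Or.inl (TS1_pair_mem (by omega) h')
    · obtain ⟨w, hw, hwe⟩ := NC1_unpack h
      have hw' : w ∈ insert (0:ℤ) B2 := hw
      have hwe' : y = c + (∑ z ∈ B2, z) - w := hwe
      rw [hsum2] at hwe'
      rw [hB2repr] at hw'
      simp only [Finset.mem_insert, Finset.mem_singleton] at hw'
      right
      omega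
  have conv4 : ∀ y ∈ TS 1 B,
      ((y = 0 ∨ y = a ∨ y = b ∨ y = a + b) ∨
       (y = c + (a + b) ∨ y = c + b ∨ y = c + a)) ∨
      (y = e + (a + b + c) ∨ y = e + (b + c) ∨ y = e + (a + c) ∨ y = e + (a + b)) := by
    intro y hy
    rw [hdecomp4] at hy
    rcases Finset.mem_union.1 hy with h | h
    · exact Or.inl (conv3 y h)
    · obtain ⟨w, hw, hwe⟩ := NC1_unpack h
      have hw' : w ∈ insert (0:ℤ) B3 := hw
      have hwe' : y = e + (∑ z ∈ B3, z) - w := hwe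
      rw [hsum3] at hwe'
      rw [hB3repr, hB2repr] at hw'
      simp only [Finset.mem_insert, Finset.mem_singleton] at hw'
      right
      omega
  -- the four key membership facts
  have m1 := conv3 c (single_mem_TS (le_refl 1) hcB3)
  have m2 := conv4 e (single_mem_TS (le_refl 1) heB)
  have m3 := conv4 (a + e) (pair_mem_TS (le_refl 1) haB heB (by omega))
  have m4 := conv4 (b + e) (pair_mem_TS (le_refl 1) hbB heB (by omega))
  -- crunch
  have hfacts : b = 2*a ∧ c = 3*a ∧ e = 4*a := by omega
  obtain ⟨hb2, hc3, he4⟩ := hfacts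
  refine ⟨a, ha0, ?_⟩
  have hIcc : Finset.Icc (1:ℤ) ((4:ℕ):ℤ) = {1, 2, 3, 4} := by
    ext z
    simp only [Finset.mem_Icc, Finset.mem_insert, Finset.mem_singleton]
    push_cast
    omega
  rw [hIcc, hBrepr, hB3repr, hB2repr]
  simp only [Finset.image_insert, Finset.image_singleton]
  ext z
  simp only [Finset.mem_insert, Finset.mem_singleton]
  constructor
  · rintro (rfl | rfl | rfl | rfl) <;> omega
  · rintro (rfl | rfl | rfl | rfl) <;> omega

theorem main {r : ℕ} (hr : 1 ≤ r) :
    ∀ n : ℕ, 1 ≤ n → (4 ≤ n ∨ 2 ≤ r) → ∀ B : Finset ℤ, (∀ z ∈ B, 0 < z) → B.card = n →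
    (TS r B).card = 1 + r * G n →
    ∃ d : ℤ, 0 < d ∧ B = (Finset.Icc (1:ℤ) (n:ℤ)).image (fun i => d * i) := by
  intro n
  induction n with
  | zero => omega
  | succ m ih =>
    intro h1 hcond B hpos hcard heq
    rcases Nat.eq_zero_or_pos m with hm | hm
    · -- n = 1
      subst hm
      obtain ⟨x, hx⟩ := Finset.card_eq_one.1 hcard
      have hx0 : 0 < x := hpos x (hx ▸ Finset.mem_singleton_self x)
      refine ⟨x, hx0, ?_⟩
      have : Finset.Icc (1:ℤ) ((1:ℕ):ℤ) = {1} := by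
        ext z; simp only [Finset.mem_Icc, Finset.mem_singleton]; push_cast; omega
      rw [hx, this, Finset.image_singleton, mul_one]
    · -- n = m + 1 ≥ 2
      by_cases h4 : r = 1 ∧ m + 1 = 4
      · obtain ⟨hr1, hm4⟩ := h4
        subst hr1
        have hcard4 : B.card = 4 := by omega
        have heq' : (TS 1 B).card = 1 + 1 * G B.card := by
          rw [hcard4, ← hm4]; exact heq
        obtain ⟨d, hd, hBd⟩ := base4 hpos hcard4 heq'
        refine ⟨d, hd, ?_⟩
        rw [hm4]
        exact hBd
      · -- generic step
        have hne : B.Nonempty := Finset.card_pos.1 (by omega)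
        set x := B.max' hne with hx_def
        have hxB : x ∈ B := B.max'_mem hne
        set B' := B.erase x with hB'_def
        have hcard' : B'.card = m := by
          rw [hB'_def, Finset.card_erase_of_mem hxB, hcard]
          omega
        have hpos' : ∀ z ∈ B', 0 < z := fun z hz => hpos z (Finset.mem_of_mem_erase hz)
        obtain ⟨hcard_ts, _⟩ := hered hr hne hpos (by rw [hcard]; exact heq)
        have heq' : (TS r B').card = 1 + r * G m := by
          have h' : (TS r B').card = 1 + r * G (B.card - 1) := hcard_ts
          have hGm : B.card - 1 = m := by omega
          rw [h', hGm]
        have hcond' : 4 ≤ m ∨ 2 ≤ r := by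
          rcases hcond with h | h
          · rcases Nat.lt_or_ge r 2 with h2 | h2
            · left
              have : r = 1 := by omega
              subst this
              rcases Nat.lt_or_ge m 4 with h3 | h3
              · exfalso; exact h4 ⟨rfl, by omega⟩
              · exact h3
            · right; exact h2
          · right; exact h
        obtain ⟨d, hd, hB'd⟩ := ih hm hcond' B' hpos' hcard' heq'
        -- x is bigger than d * m
        have hdm : d * (m:ℤ) ∈ B' := by
          rw [hB'd]
          exact Finset.mem_image.2 ⟨(m:ℤ), Finset.mem_Icc.2 ⟨by exact_mod_cast hm, le_refl _⟩, rfl⟩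
        have hxgt : d * (m:ℤ) < x :=
          lt_of_le_of_ne (B.le_max' _ (Finset.mem_of_mem_erase hdm))
            (Finset.ne_of_mem_erase hdm)
        have hBins : B = insert x B' := by rw [hB'_def, Finset.insert_erase hxB]
        have hrepr : insert x ((Finset.Icc (1:ℤ) (m:ℤ)).image (fun i => d * i)) = B := by
          rw [← hB'd, ← hBins]
        have heqB : (TS r (insert x ((Finset.Icc (1:ℤ) (m:ℤ)).image (fun i => d * i)))).card
            = 1 + r * G m + r * (m+1) := by
          rw [hrepr, heq, G_succ, Nat.mul_add]
          omega
        have hstep := STEP hr hd hm (by omega) hxgt heqB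
        refine ⟨d, hd, ?_⟩
        rw [hBins, hB'd, hstep]
        have : Finset.Icc (1:ℤ) ((m+1:ℕ):ℤ) = insert ((m:ℤ)+1) (Finset.Icc (1:ℤ) (m:ℤ)) := by
          ext z; simp only [Finset.mem_insert, Finset.mem_Icc]; push_cast; omega
        rw [this, Finset.image_insert]

lemma subseq_eq_TS {r : ℕ} (hr : 1 ≤ r) {A : Finset ℤ} (h0 : (0:ℤ) ∈ A) :
    SubseqSums r A 1 = (TS r A : Set ℤ) := by
  classical
  ext y
  simp only [SubseqSums, Set.mem_setOf_eq, Finset.mem_coe]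
  constructor
  · rintro ⟨lam, hle, _, _, rfl⟩
    exact mem_TS_iff.2 ⟨lam, hle, rfl⟩
  · intro hy
    obtain ⟨f, hf, rfl⟩ := mem_TS_iff.1 hy
    refine ⟨fun z => if z = 0 then max (f 0) 1 else if z ∈ A then f z else 0, ?_, ?_, ?_, ?_⟩
    · intro a
      by_cases h1 : a = 0
      · simp only [h1, if_pos rfl]
        exact max_le (hf 0) hr
      · by_cases h2 : a ∈ A <;> simp [h1, h2, hf a]
    · intro a ha
      have h1 : a ≠ 0 := fun h => ha (h ▸ h0)
      simp [h1, ha]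
    · calc 1 ≤ (fun z => if z = 0 then max (f 0) 1 else if z ∈ A then f z else 0) 0 := by
            simp
        _ ≤ ∑ a ∈ A, (fun z => if z = 0 then max (f 0) 1 else if z ∈ A then f z else 0) a :=
            Finset.single_le_sum (f := fun z => if z = 0 then max (f 0) 1 else if z ∈ A then f z else 0) (fun a _ => Nat.zero_le _) h0
    · apply Finset.sum_congr rfl
      intro a ha
      by_cases h1 : a = 0
      · subst h1; simp
      · simp [h1, ha]

theorem stmt_16 (k r : ℕ) (A : Finset ℤ)
    (hk : 7 ≤ k) (hr : 1 ≤ r) (hAcard : A.card = k)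
    (hAnonneg : ∀ a ∈ A, 0 ≤ a) (h0A : (0 : ℤ) ∈ A)
    (heq : (SubseqSums r A 1).ncard = 1 + r * k * (k - 1) / 2) :
    ∃ d : ℤ, 0 < d ∧ A = (Finset.Icc (0 : ℤ) ((k : ℤ) - 1)).image (fun i => d * i) := by
  classical
  obtain ⟨n, hkn⟩ : ∃ n, k = n + 1 := ⟨k - 1, by omega⟩
  subst hkn
  set B := A.erase 0 with hB_def
  have hBcard : B.card = n := by
    rw [hB_def, Finset.card_erase_of_mem h0A, hAcard]
    omega
  have hBpos : ∀ z ∈ B, 0 < z := fun z hz =>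
    lt_of_le_of_ne (hAnonneg z (Finset.mem_of_mem_erase hz))
      (Ne.symm (Finset.ne_of_mem_erase hz))
  have h0B : (0:ℤ) ∉ B := Finset.notMem_erase 0 A
  have hAins : A = insert 0 B := by rw [hB_def, Finset.insert_erase h0A]
  -- TS r A = TS r B
  have hTSA : TS r A = TS r B := by
    rw [hAins, TS_insert r h0B]
    have hQ0 : Qf r 0 = (0 : Finset ℤ) := by
      ext z
      simp only [Qf, Finset.mem_image, Finset.mem_range]
      constructor
      · rintro ⟨t, _, rfl⟩; simp
      · intro hz
        refine ⟨0, Nat.succ_pos r, ?_⟩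
        simp only [Finset.mem_zero] at hz
        simp [hz]
    rw [hQ0, zero_add]
  -- rewrite the cardinality
  have hcardTS : (TS r B).card = 1 + r * G n := by
    rw [subseq_eq_TS hr h0A, Set.ncard_coe_finset, hTSA] at heq
    rw [heq]
    have h2G := two_G n
    have hkk : (n+1) - 1 = n := by omega
    rw [hkk]
    have hprod : r * (n+1) * n = 2 * (r * G n) := by
      calc r * (n+1) * n = r * (n * (n+1)) := by ring
        _ = r * (2 * G n) := by rw [← h2G]
        _ = 2 * (r * G n) := by ring
    omega
  have hn : 1 ≤ n := by omega
  obtain ⟨d, hd, hBd⟩ := main hr n hn (Or.inl (by omega)) B hBpos hBcard hcardTS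
  refine ⟨d, hd, ?_⟩
  have hIcc : Finset.Icc (0:ℤ) (((n+1:ℕ):ℤ) - 1) = insert 0 (Finset.Icc (1:ℤ) (n:ℤ)) := by
    ext z
    simp only [Finset.mem_insert, Finset.mem_Icc]
    push_cast
    omega
  rw [hAins, hIcc, Finset.image_insert, mul_zero, hBd]
end

section
/- Let k ≥ 4, r ≥ 1 and α be integers with 1 ≤ α < kr, and let m ∈ [1,k] be the integer such that (m−1)r ≤ α < mr. Let A = {a_1 < a_2 < ⋯ < a_k} be a set of k positive integers. Then |Σ_α(𝔸)| ≥ r·k·(k+1)/2 − r·m·(m+1)/2 + m·(mr − α) + 1, where 𝔸 = (a_1,…,a_k)_r. -/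
lemma sum_swap_aux {R : Type*} [CommSemiring R] {k : ℕ} (c μ : Fin k → R) (i0 : Fin k) (v : R) :
    ∑ j, c j * (if j = i0 then v else μ j) + c i0 * μ i0 = ∑ j, c j * μ j + c i0 * v := by
  classical
  rw [← Finset.add_sum_erase _ _ (Finset.mem_univ i0),
      ← Finset.add_sum_erase _ (fun j => c j * μ j) (Finset.mem_univ i0)]
  simp only [if_pos rfl]
  have h1 : ∑ j ∈ Finset.univ.erase i0, c j * (if j = i0 then v else μ j)
      = ∑ j ∈ Finset.univ.erase i0, c j * μ j := by
    refine Finset.sum_congr rfl fun j hj => ?_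
    rw [if_neg (Finset.ne_of_mem_erase hj)]
  rw [h1]; simp only [eq_self_iff_true, if_true]; ring

lemma gauss (n : ℕ) : 2 * (∑ i ∈ Finset.range n, (i + 1)) = n * (n + 1) := by
  induction n with
  | zero => simp
  | succ n ih => rw [Finset.sum_range_succ, Nat.mul_add, ih]; ring

lemma sum_reindex {k : ℕ} (A : Finset ℤ) (hAcard : A.card = k) (μ : Fin k → ℕ)
    {M : Type*} [AddCommMonoid M] (g : ℤ → ℕ → M) :
    ∑ a ∈ A, g a (if h : a ∈ A then μ ((A.orderIsoOfFin hAcard).symm ⟨a, h⟩) else 0)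
      = ∑ i : Fin k, g ((A.orderIsoOfFin hAcard i : ℤ)) (μ i) := by
  classical
  set e := A.orderIsoOfFin hAcard
  rw [← Finset.sum_attach A (fun a => g a (if h : a ∈ A then μ (e.symm ⟨a, h⟩) else 0))]
  rw [← Finset.univ_eq_attach]
  rw [← Equiv.sum_comp e.toEquiv
    (fun x : {a // a ∈ A} => g x (if h : (x : ℤ) ∈ A then μ (e.symm ⟨x, h⟩) else 0))]
  refine Finset.sum_congr rfl fun i _ => ?_
  simp

lemma mem_subseqSums {k r α : ℕ} (A : Finset ℤ) (hAcard : A.card = k)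
    (μ : Fin k → ℕ) (hμ : ∀ i, μ i ≤ r) (hα : α ≤ ∑ i, μ i) :
    (∑ i, (μ i : ℤ) * ((A.orderIsoOfFin hAcard i : ℤ))) ∈ SubseqSums r A α := by
  classical
  refine ⟨fun x => if h : x ∈ A then μ ((A.orderIsoOfFin hAcard).symm ⟨x, h⟩) else 0,
    ?_, ?_, ?_, ?_⟩
  · intro a; simp only; split
    · exact hμ _
    · exact Nat.zero_le r
  · intro a ha; exact dif_neg ha
  · rw [sum_reindex A hAcard μ (fun _ n => n)]; exact hα
  · rw [sum_reindex A hAcard μ (fun a n => (n : ℤ) * a)]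

lemma sum_swap_aux' {R : Type*} [CommSemiring R] {k : ℕ} (c μ : Fin k → R) (i0 : Fin k) (v : R) :
    ∑ j, (if j = i0 then v else μ j) * c j + μ i0 * c i0 = ∑ j, μ j * c j + v * c i0 := by
  classical
  rw [← Finset.add_sum_erase _ _ (Finset.mem_univ i0),
      ← Finset.add_sum_erase _ (fun j => μ j * c j) (Finset.mem_univ i0)]
  have h1 : ∑ j ∈ Finset.univ.erase i0, (if j = i0 then v else μ j) * c j
      = ∑ j ∈ Finset.univ.erase i0, μ j * c j := by
    refine Finset.sum_congr rfl fun j hj => ?_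
    rw [if_neg (Finset.ne_of_mem_erase hj)]
  rw [h1]; simp only [eq_self_iff_true, if_true]; ring

lemma chain {k r α : ℕ} (A : Finset ℤ) (hAcard : A.card = k)
    (hApos : ∀ a ∈ A, 0 < a) :
    ∀ d : ℕ, ∀ μ : Fin k → ℕ, (∀ i, μ i ≤ r) → α ≤ ∑ i, μ i →
      (∑ i : Fin k, ((i : ℕ) + 1) * μ i) + d = r * ∑ i : Fin k, ((i : ℕ) + 1) →
      ∃ F : Finset ℤ, F.card = d + 1 ∧ ↑F ⊆ SubseqSums r A α ∧
        ∀ x ∈ F, (∑ i, (μ i : ℤ) * ((A.orderIsoOfFin hAcard i : ℤ))) ≤ x := by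
  classical
  intro d
  induction d with
  | zero =>
    intro μ hμ hα _
    refine ⟨{∑ i, (μ i : ℤ) * ((A.orderIsoOfFin hAcard i : ℤ))}, by simp, ?_, by simp⟩
    simp only [Finset.coe_singleton, Set.singleton_subset_iff]
    exact mem_subseqSums A hAcard μ hμ hα
  | succ d ih =>
    intro μ hμ hα hψ
    have hex : ∃ i, μ i < r := by
      by_contra h
      push_neg at h
      have heq : ∀ i : Fin k, μ i = r := fun i => le_antisymm (hμ i) (h i)
      have : (∑ i : Fin k, ((i:ℕ)+1) * μ i) = r * ∑ i : Fin k, ((i:ℕ)+1) := by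
        rw [Finset.mul_sum]
        exact Finset.sum_congr rfl fun i _ => by rw [heq i, mul_comm]
      omega
    obtain ⟨iw, hiw⟩ := hex
    have hr1 : 1 ≤ r := Nat.one_le_iff_ne_zero.2 (by omega)
    set S := Finset.univ.filter (fun i => μ i < r) with hSdef
    have hSne : S.Nonempty := ⟨iw, by simp [hSdef, hiw]⟩
    set i1 := S.min' hSne with hi1
    have h1 : μ i1 < r := by
      have := S.min'_mem hSne
      simp only [hSdef, Finset.mem_filter] at this
      exact this.2
    have hmin : ∀ j, j < i1 → μ j = r := by
      intro j hj
      by_contra h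
      have hjlt : μ j < r := lt_of_le_of_ne (hμ j) h
      have : i1 ≤ j := S.min'_le j (by simp [hSdef, hjlt])
      exact absurd hj (not_lt.2 this)
    have hposa : ∀ i : Fin k, (0:ℤ) < ((A.orderIsoOfFin hAcard i : ℤ)) :=
      fun i => hApos _ (A.orderIsoOfFin hAcard i).2
    by_cases h0 : (i1 : ℕ) = 0
    · -- Case 1: increment μ at i1 (smallest element)
      set μ' : Fin k → ℕ := fun j => if j = i1 then μ i1 + 1 else μ j with hμ'def
      have keyt : (∑ j, μ' j) + μ i1 = (∑ j, μ j) + (μ i1 + 1) := by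
        have := sum_swap_aux (fun _ : Fin k => 1) μ i1 (μ i1 + 1)
        simpa [hμ'def] using this
      have keyw : (∑ j : Fin k, ((j:ℕ)+1) * μ' j) + ((i1:ℕ)+1) * μ i1
          = (∑ j : Fin k, ((j:ℕ)+1) * μ j) + ((i1:ℕ)+1) * (μ i1 + 1) := by
        have := sum_swap_aux (fun j : Fin k => (j:ℕ)+1) μ i1 (μ i1 + 1)
        simpa [hμ'def] using this
      have hW : ((i1:ℕ)+1) * (μ i1 + 1) = ((i1:ℕ)+1) * μ i1 + ((i1:ℕ)+1) := by ring
      obtain ⟨F, hFcard, hFsub, hFge⟩ := ih μ'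
        (fun j => by
          simp only [hμ'def]
          split
          · omega
          · exact hμ j)
        (by omega)
        (by rw [h0] at keyw hW; omega)
      have keyz : (∑ i, ((μ' i : ℕ) : ℤ) * ((A.orderIsoOfFin hAcard i : ℤ)))
          = (∑ i, (μ i : ℤ) * ((A.orderIsoOfFin hAcard i : ℤ)))
            + ((A.orderIsoOfFin hAcard i1 : ℤ)) := by
        have h := sum_swap_aux' (fun j : Fin k => ((A.orderIsoOfFin hAcard j : ℤ)))
          (fun j => (μ j : ℤ)) i1 ((μ i1 : ℤ) + 1)
        have hcast : ∀ j, ((μ' j : ℕ) : ℤ)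
            = (if j = i1 then (μ i1 : ℤ) + 1 else (μ j : ℤ)) := by
          intro j; simp only [hμ'def]; split <;> simp
        simp only [hcast]
        linarith [h]
      set Sμ := ∑ i, (μ i : ℤ) * ((A.orderIsoOfFin hAcard i : ℤ)) with hSμ
      refine ⟨insert Sμ F, ?_, ?_, ?_⟩
      · rw [Finset.card_insert_of_notMem, hFcard]
        intro hmem
        have := hFge Sμ hmem
        rw [keyz] at this
        have := hposa i1
        linarith
      · rw [Finset.coe_insert]
        exact Set.insert_subset (mem_subseqSums A hAcard μ hμ hα) hFsub
      · intro x hx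
        rcases Finset.mem_insert.1 hx with rfl | hx
        · exact le_refl _
        · have := hFge x hx
          rw [keyz] at this
          have := hposa i1
          linarith
    · -- Case 2: move one unit from i0 = i1 - 1 to i1
      have hk0 : 0 < k := i1.pos
      have hi1lt : (i1:ℕ) < k := i1.isLt
      set i0 : Fin k := ⟨(i1:ℕ) - 1, by omega⟩ with hi0def
      have hi0lt : i0 < i1 := by
        rw [Fin.lt_def]
        simp only [hi0def]
        omega
      have hne : i0 ≠ i1 := ne_of_lt hi0lt
      have hμi0 : μ i0 = r := hmin i0 hi0lt
      set ν : Fin k → ℕ := fun j => if j = i0 then r - 1 else μ j with hνdef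
      set μ' : Fin k → ℕ := fun j => if j = i1 then μ i1 + 1 else ν j with hμ'def
      have hνi1 : ν i1 = μ i1 := by simp only [hνdef]; rw [if_neg (Ne.symm hne)]
      -- totals
      have keyt1 : (∑ j, ν j) + r = (∑ j, μ j) + (r - 1) := by
        have := sum_swap_aux (fun _ : Fin k => 1) μ i0 (r - 1)
        simp only [one_mul, hμi0] at this
        simpa [hνdef] using this
      have keyt2 : (∑ j, μ' j) + μ i1 = (∑ j, ν j) + (μ i1 + 1) := by
        have := sum_swap_aux (fun _ : Fin k => 1) ν i1 (μ i1 + 1)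
        simp only [one_mul, hνi1] at this
        simpa [hμ'def] using this
      -- weighted (ψ)
      have keyw1 : (∑ j : Fin k, ((j:ℕ)+1) * ν j) + ((i0:ℕ)+1) * r
          = (∑ j : Fin k, ((j:ℕ)+1) * μ j) + ((i0:ℕ)+1) * (r - 1) := by
        have := sum_swap_aux (fun j : Fin k => (j:ℕ)+1) μ i0 (r - 1)
        rw [hμi0] at this
        simpa [hνdef] using this
      have keyw2 : (∑ j : Fin k, ((j:ℕ)+1) * μ' j) + ((i1:ℕ)+1) * μ i1
          = (∑ j : Fin k, ((j:ℕ)+1) * ν j) + ((i1:ℕ)+1) * (μ i1 + 1) := by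
        have := sum_swap_aux (fun j : Fin k => (j:ℕ)+1) ν i1 (μ i1 + 1)
        rw [hνi1] at this
        simpa [hμ'def] using this
      have hcr : ((i0:ℕ)+1) * (r - 1) + ((i0:ℕ)+1) = ((i0:ℕ)+1) * r := by
        rw [← Nat.mul_succ]
        congr 1
        omega
      have hW1 : ((i1:ℕ)+1) * (μ i1 + 1) = ((i1:ℕ)+1) * μ i1 + ((i1:ℕ)+1) := by ring
      have hi01 : (i0:ℕ) + 1 = (i1:ℕ) := by simp only [hi0def]; omega
      obtain ⟨F, hFcard, hFsub, hFge⟩ := ih μ'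
        (fun j => by
          simp only [hμ'def, hνdef]
          split
          · omega
          · split
            · omega
            · exact hμ j)
        (by omega)
        (by omega)
      -- integer sums
      have hzcast : ((r - 1 : ℕ) : ℤ) = (r : ℤ) - 1 := by omega
      have keyz1 : (∑ i, ((ν i : ℕ) : ℤ) * ((A.orderIsoOfFin hAcard i : ℤ)))
          = (∑ i, (μ i : ℤ) * ((A.orderIsoOfFin hAcard i : ℤ)))
            - ((A.orderIsoOfFin hAcard i0 : ℤ)) := by
        have h := sum_swap_aux' (fun j : Fin k => ((A.orderIsoOfFin hAcard j : ℤ)))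
          (fun j => (μ j : ℤ)) i0 ((r : ℤ) - 1)
        have hcast : ∀ j, ((ν j : ℕ) : ℤ)
            = (if j = i0 then (r : ℤ) - 1 else (μ j : ℤ)) := by
          intro j; simp only [hνdef]; split
          · exact hzcast
          · rfl
        simp only [hcast]
        have hμi0z : ((μ i0 : ℕ) : ℤ) = (r : ℤ) := by rw [hμi0]
        rw [hμi0z] at h
        linarith [h]
      have keyz2 : (∑ i, ((μ' i : ℕ) : ℤ) * ((A.orderIsoOfFin hAcard i : ℤ)))
          = (∑ i, ((ν i : ℕ) : ℤ) * ((A.orderIsoOfFin hAcard i : ℤ)))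
            + ((A.orderIsoOfFin hAcard i1 : ℤ)) := by
        have h := sum_swap_aux' (fun j : Fin k => ((A.orderIsoOfFin hAcard j : ℤ)))
          (fun j => (ν j : ℤ)) i1 ((μ i1 : ℤ) + 1)
        have hcast : ∀ j, ((μ' j : ℕ) : ℤ)
            = (if j = i1 then (μ i1 : ℤ) + 1 else (ν j : ℤ)) := by
          intro j; simp only [hμ'def]; split <;> simp
        simp only [hcast]
        have : ((ν i1 : ℕ) : ℤ) = (μ i1 : ℤ) := by rw [hνi1]
        rw [this] at h
        linarith [h]
      have hlt : ((A.orderIsoOfFin hAcard i0 : ℤ)) < ((A.orderIsoOfFin hAcard i1 : ℤ)) := by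
        have : A.orderIsoOfFin hAcard i0 < A.orderIsoOfFin hAcard i1 :=
          (A.orderIsoOfFin hAcard).lt_iff_lt.2 hi0lt
        exact_mod_cast this
      set Sμ := ∑ i, (μ i : ℤ) * ((A.orderIsoOfFin hAcard i : ℤ)) with hSμ
      have hSμ' : (∑ i, ((μ' i : ℕ) : ℤ) * ((A.orderIsoOfFin hAcard i : ℤ)))
          = Sμ - ((A.orderIsoOfFin hAcard i0 : ℤ)) + ((A.orderIsoOfFin hAcard i1 : ℤ)) := by
        rw [keyz2, keyz1]
      refine ⟨insert Sμ F, ?_, ?_, ?_⟩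
      · rw [Finset.card_insert_of_notMem, hFcard]
        intro hmem
        have := hFge Sμ hmem
        rw [hSμ'] at this
        linarith
      · rw [Finset.coe_insert]
        exact Set.insert_subset (mem_subseqSums A hAcard μ hμ hα) hFsub
      · intro x hx
        rcases Finset.mem_insert.1 hx with rfl | hx
        · exact le_refl _
        · have := hFge x hx
          rw [hSμ'] at this
          linarith

theorem stmt_17 (k r α m : ℕ) (A : Finset ℤ)
    (hk : 4 ≤ k) (hr : 1 ≤ r) (hα1 : 1 ≤ α) (hαkr : α < k * r)
    (hm1 : 1 ≤ m) (hmk : m ≤ k) (hmα : (m - 1) * r ≤ α) (hαm : α < m * r)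
    (hAcard : A.card = k) (hApos : ∀ a ∈ A, 0 < a) :
    r * k * (k + 1) / 2 - r * m * (m + 1) / 2 + m * (m * r - α) + 1
      ≤ (SubseqSums r A α).ncard := by
  classical
  obtain ⟨m', rfl⟩ : ∃ m', m = m' + 1 := ⟨m - 1, by omega⟩
  have hmα' : m' * r ≤ α := by
    have h : (m' + 1 - 1) * r = m' * r := by norm_num
    rwa [h] at hmα
  have hmr' : (m' + 1) * r = m' * r + r := by ring
  have hαm' : α < m' * r + r := by omega
  set c' := α - m' * r with hc'
  have hcr : c' < r := by omega
  set μ0 : Fin k → ℕ := fun i => if (i:ℕ) < m' then r else if (i:ℕ) = m' then c' else 0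
    with hμ0
  have hm'k : m' + 1 ≤ k := hmk
  have key : ∀ w : ℕ → ℕ, (∑ i : Fin k, w (i:ℕ) * μ0 i)
      = (∑ i ∈ Finset.range m', w i * r) + w m' * c' := by
    intro w
    have h1 : (∑ i : Fin k, w (i:ℕ) * μ0 i)
        = ∑ i ∈ Finset.range k, w i * (if i < m' then r else if i = m' then c' else 0) := by
      simp only [hμ0]
      exact Fin.sum_univ_eq_sum_range
        (fun n => w n * (if n < m' then r else if n = m' then c' else 0)) k
    rw [h1]
    rw [← Finset.sum_subset (Finset.range_subset_range.2 hm'k) (fun x hx hnx => ?_)]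
    · rw [Finset.sum_range_succ]
      congr 1
      · exact Finset.sum_congr rfl fun i hi => by rw [if_pos (Finset.mem_range.1 hi)]
      · rw [if_neg (lt_irrefl m'), if_pos rfl]
    · have hx1 : m' < x := by
        simp only [Finset.mem_range] at hx hnx
        omega
      rw [if_neg (by omega), if_neg (by omega), mul_zero]
  have htot : (∑ i : Fin k, μ0 i) = m' * r + c' := by
    have h := key (fun _ => 1)
    simp only [one_mul] at h
    rw [Finset.sum_const, Finset.card_range, smul_eq_mul] at h
    exact h
  have hψ0 : (∑ i : Fin k, ((i:ℕ)+1) * μ0 i)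
      = (∑ i ∈ Finset.range m', (i+1)) * r + (m'+1) * c' := by
    have h := key (fun n => n + 1)
    rw [← Finset.sum_mul] at h
    exact h
  have hΨ : (r * ∑ i : Fin k, ((i:ℕ)+1)) = r * ∑ i ∈ Finset.range k, (i+1) := by
    congr 1
    exact Fin.sum_univ_eq_sum_range (fun n => n + 1) k
  set Gm := ∑ i ∈ Finset.range m', (i+1) with hGmdef
  set Gk := ∑ i ∈ Finset.range k, (i+1) with hGkdef
  have gm : 2 * Gm = m' * (m' + 1) := by rw [hGmdef]; exact gauss m'
  have gk : 2 * Gk = k * (k + 1) := by rw [hGkdef]; exact gauss k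
  have f1 : 2 * (Gm * r) = m' * (m' + 1) * r := by rw [← gm]; ring
  have f2 : 2 * (r * Gk) = r * k * (k + 1) := by
    have h : r * k * (k + 1) = k * (k + 1) * r := by ring
    rw [h, ← gk]; ring
  have e8 : (m' + 1) * c' + (m' + 1) ≤ (m' + 1) * r := by
    have h1 : (m' + 1) * (c' + 1) ≤ (m' + 1) * r := Nat.mul_le_mul_left _ hcr
    have h2 : (m' + 1) * (c' + 1) = (m' + 1) * c' + (m' + 1) := by ring
    omega
  have e9 : (m' + 1) * (m' + 2) * r ≤ k * (k + 1) * r :=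
    Nat.mul_le_mul_right r (Nat.mul_le_mul hm'k (by omega))
  have e9' : m' * (m' + 1) * r + 2 * ((m' + 1) * r) = (m' + 1) * (m' + 2) * r := by ring
  have f10 : k * (k + 1) * r = r * k * (k + 1) := by ring
  have hle : Gm * r + (m' + 1) * c' ≤ r * Gk := by omega
  set dd := r * Gk - (Gm * r + (m' + 1) * c') with hdd
  obtain ⟨F, hFcard, hFsub, hFge⟩ := chain (k := k) (r := r) (α := α) A hAcard hApos dd μ0
    (fun i => by
      simp only [hμ0]
      split
      · exact le_refl r
      · split <;> omega)
    (by omega)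
    (by rw [hψ0, hΨ]; omega)
  have hfin : (SubseqSums r A α).Finite := by
    apply Set.Finite.subset (Set.finite_Icc (0:ℤ) ((r:ℤ) * ∑ a ∈ A, a))
    rintro x ⟨lam, hlam, _, _, rfl⟩
    refine ⟨Finset.sum_nonneg fun a ha =>
      mul_nonneg (Int.natCast_nonneg _) (hApos a ha).le, ?_⟩
    rw [Finset.mul_sum]
    refine Finset.sum_le_sum fun a ha => ?_
    exact mul_le_mul_of_nonneg_right (by exact_mod_cast hlam a) (hApos a ha).le
  have hcard : dd + 1 ≤ (SubseqSums r A α).ncard := by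
    rw [← hFcard, ← Set.ncard_coe_finset]
    exact Set.ncard_le_ncard hFsub hfin
  refine le_trans ?_ hcard
  have f3 : r * (m' + 1) * (m' + 1 + 1) = m' * (m' + 1) * r + 2 * ((m' + 1) * r) := by ring
  have f4 : (m' + 1) * ((m' + 1) * r - α) + (m' + 1) * α = (m' + 1) * ((m' + 1) * r) := by
    rw [← Nat.mul_add, Nat.sub_add_cancel hαm.le]
  have f5 : 2 * ((m' + 1) * ((m' + 1) * r)) = m' * (m' + 1) * r + r * (m' + 1) * (m' + 1 + 1) := by
    ring
  have f6 : (m' + 1) * c' + (m' + 1) * (m' * r) = (m' + 1) * α := by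
    rw [hc', ← Nat.mul_add, Nat.sub_add_cancel hmα']
  have f7 : (m' + 1) * (m' * r) = m' * (m' + 1) * r := by ring
  omega
end

section
/- Let k ≥ 4, r ≥ 1 and α be integers with 1 ≤ α < kr, and let m ∈ [1,k] be the integer such that (m−1)r ≤ α < mr. Let A = {a_1 < a_2 < ⋯ < a_k} be a set of k nonnegative integers with 0 ∈ A. Then |Σ_α(𝔸)| ≥ r·k·(k−1)/2 − r·m·(m−1)/2 + (m−1)·(mr − α) + 1, where 𝔸 = (a_1,…,a_k)_r. -/
open Finset

theorem Finset.mul_sum_Ico_id (r : ℕ) {m k : ℕ} (h : m ≤ k) :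
    r * ∑ j ∈ Ico m k, j = r * k * (k - 1) / 2 - r * m * (m - 1) / 2 := by
  have half : ∀ n, r * n * (n - 1) / 2 = r * ∑ j ∈ range n, j := fun n => by
    rw [mul_assoc, ← sum_range_id_mul_two, ← mul_assoc, Nat.mul_div_cancel _ two_pos]
  rw [half, half, ← sum_range_add_sum_Ico _ h, mul_add, Nat.add_sub_cancel_left]

namespace SubseqSums

variable {r α : ℕ} {A : Finset ℤ}

theorem finite (r : ℕ) (A : Finset ℤ) (α : ℕ) : (SubseqSums r A α).Finite := by
  refine (Set.finite_Icc (-(r * ∑ a ∈ A, |a|)) (r * ∑ a ∈ A, |a|)).subset ?_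
  rintro _ ⟨lam, hlam, -, -, rfl⟩
  rw [Set.mem_Icc, ← abs_le, mul_sum]
  refine (abs_sum_le_sum_abs _ _).trans (sum_le_sum fun a _ => ?_)
  rw [abs_mul, Nat.abs_cast]
  exact mul_le_mul_of_nonneg_right (by exact_mod_cast hlam a) (abs_nonneg a)

theorem mono {B : Finset ℤ} (h : A ⊆ B) : SubseqSums r A α ⊆ SubseqSums r B α := by
  rintro _ ⟨lam, hr, hA, hα, rfl⟩
  refine ⟨lam, hr, fun a ha => hA a fun h' => ha (h h'), ?_, ?_⟩
  · rwa [← sum_subset h fun a _ ha => hA a ha]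
  · rw [← sum_subset h fun a _ ha => by simp [hA a ha]]

theorem subset_of_le {β : ℕ} (h : α ≤ β) : SubseqSums r A β ⊆ SubseqSums r A α :=
  fun _ ⟨lam, hr, hA, hβ, hx⟩ => ⟨lam, hr, hA, h.trans hβ, hx⟩

theorem le_mul_sum (hA : ∀ a ∈ A, 0 ≤ a) {x : ℤ} (hx : x ∈ SubseqSums r A α) :
    x ≤ r * ∑ a ∈ A, a := by
  obtain ⟨lam, hr, -, -, rfl⟩ := hx
  rw [mul_sum]
  exact sum_le_sum fun a ha => mul_le_mul_of_nonneg_right (by exact_mod_cast hr a) (hA a ha)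

theorem mul_sum_mem (r : ℕ) (A : Finset ℤ) :
    (r : ℤ) * ∑ a ∈ A, a ∈ SubseqSums r A (r * #A) := by
  classical
  refine ⟨fun a => if a ∈ A then r else 0, fun a => by dsimp only; split_ifs <;> omega,
    fun a ha => if_neg ha, ?_, ?_⟩
  · simp [mul_comm]
  · simp [mul_sum]

theorem add_mul_mem_insert {M x : ℤ} {d : ℕ} (hM : M ∉ A) (hd : d ≤ r)
    (hx : x ∈ SubseqSums r A α) : x + d * M ∈ SubseqSums r (insert M A) (α + d) := by
  classical
  obtain ⟨lam, hr, hA, hα, rfl⟩ := hx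
  have hlam : ∀ a ∈ A, Function.update lam M d a = lam a := fun a ha =>
    Function.update_of_ne (ne_of_mem_of_not_mem ha hM) _ _
  refine ⟨Function.update lam M d, ?_, ?_, ?_, ?_⟩
  · intro a
    rcases eq_or_ne a M with rfl | h
    · simpa using hd
    · simpa [h] using hr a
  · intro a ha
    rw [mem_insert, not_or] at ha
    rw [Function.update_of_ne ha.1]
    exact hA a ha.2
  · rw [sum_insert hM, sum_congr rfl hlam, Function.update_self, add_comm d]
    exact Nat.add_le_add_right hα d
  · rw [sum_insert hM, sum_congr rfl fun a ha => by rw [hlam a ha], Function.update_self]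
    ring

theorem mul_sum_sub_mem {a : ℤ} (ha : a ∈ A) (hr : 1 ≤ r) :
    (r : ℤ) * ∑ b ∈ A, b - a ∈ SubseqSums r A (r * #A - 1) := by
  have h := add_mul_mem_insert (notMem_erase a A) (Nat.sub_le r 1) (mul_sum_mem r (A.erase a))
  rw [insert_erase ha] at h
  convert h using 1
  · have hr' : r ≤ r * #A := Nat.le_mul_of_pos_right r (card_pos.2 ⟨a, ha⟩)
    rw [card_erase_of_mem ha, Nat.mul_sub_one]
    congr 1
    omega
  · rw [← add_sum_erase A _ ha]
    push_cast [hr]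
    ring

def fan (v M : ℤ) (N : ℕ) (B : Finset ℤ) : Finset ℤ :=
  (range N ×ˢ B).image fun p => v + (p.1 + 1) * M - p.2

section fan

variable {v M : ℤ} {N : ℕ} {B : Finset ℤ}

theorem lt_of_mem_fan (hB : ∀ b ∈ B, 0 ≤ b ∧ b < M) {x : ℤ} (hx : x ∈ fan v M N B) : v < x := by
  obtain ⟨⟨c, b⟩, hcb, rfl⟩ := mem_image.1 hx
  obtain ⟨hb0, hbM⟩ := hB b (mem_product.1 hcb).2
  nlinarith [mul_nonneg (Nat.cast_nonneg (α := ℤ) c) (hb0.trans hbM.le)]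

-- For `0 ≤ b < M` the value `v + (c + 1) * M - b` lies in `(v + c * M, v + (c + 1) * M]`.
theorem card_fan (hB : ∀ b ∈ B, 0 ≤ b ∧ b < M) : #(fan v M N B) = N * #B := by
  rw [fan, card_image_of_injOn, card_product, card_range]
  rintro ⟨c, b⟩ hcb ⟨c', b'⟩ hcb' h
  obtain ⟨hb0, hbM⟩ := hB b (mem_product.1 hcb).2
  obtain ⟨hb0', hbM'⟩ := hB b' (mem_product.1 hcb').2
  simp only at h
  have hc : c = c' := by
    by_contra hne
    rcases Nat.lt_or_gt_of_ne hne with hlt | hlt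
    · have : (c : ℤ) + 1 ≤ c' := by exact_mod_cast hlt
      nlinarith
    · have : (c' : ℤ) + 1 ≤ c := by exact_mod_cast hlt
      nlinarith
  subst hc
  simp only [Prod.mk.injEq, true_and]
  linarith

theorem fan_subset_subseqSums {r α D : ℕ} (hMB : M ∉ B) (hα : α ≤ r * #B + D) :
    ↑(fan (r * ∑ b ∈ B, b + D * M) M (r - D) B) ⊆ SubseqSums r (insert M B) α := by
  intro x hx
  obtain ⟨⟨c, b⟩, hcb, rfl⟩ := mem_image.1 hx
  simp only [mem_product, mem_range] at hcb
  have hrB : 1 ≤ r * #B := Nat.mul_pos (by omega) (card_pos.2 ⟨b, hcb.2⟩)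
  have hmem := add_mul_mem_insert (r := r) (d := D + c + 1) hMB (by omega)
    (mul_sum_sub_mem hcb.2 (by omega))
  refine subset_of_le ?_ (by convert hmem using 1; push_cast; ring)
  omega

end fan

theorem ncard_add_le_ncard_insert {r α D : ℕ} {M : ℤ} {B : Finset ℤ}
    (hB : ∀ b ∈ B, 0 ≤ b ∧ b < M) (hα : α ≤ r * #B + D) {L : Set ℤ}
    (hL : L ⊆ SubseqSums r (insert M B) α) (hLle : ∀ x ∈ L, x ≤ r * ∑ b ∈ B, b + D * M) :
    L.ncard + (r - D) * #B ≤ (SubseqSums r (insert M B) α).ncard := by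
  have hMB : M ∉ B := fun h => (hB M h).2.false
  set F := fan (r * ∑ b ∈ B, b + D * M) M (r - D) B
  have hdisj : Disjoint L F := Set.disjoint_left.2 fun x hxL hxF =>
    (hLle x hxL).not_gt (lt_of_mem_fan hB hxF)
  rw [← card_fan (v := r * ∑ b ∈ B, b + D * M) hB, ← Set.ncard_coe_finset,
    ← Set.ncard_union_eq hdisj ((finite _ _ _).subset hL) F.finite_toSet]
  exact Set.ncard_le_ncard (Set.union_subset hL (fan_subset_subseqSums hMB hα)) (finite _ _ _)

theorem le_ncard_of_le_card {m : ℕ} (hmα : (m - 1) * r ≤ α) (hαm : α < m * r)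
    (hA : ∀ a ∈ A, 0 ≤ a) (hm : m ≤ #A) :
    r * ∑ j ∈ Ico m #A, j + (m - 1) * (m * r - α) + 1 ≤ (SubseqSums r A α).ncard := by
  classical
  induction A using Finset.induction_on_max with
  | empty =>
    rw [card_empty, Nat.le_zero] at hm
    simp [hm] at hαm
  | insert M B hMB ih =>
    have hB : ∀ b ∈ B, 0 ≤ b ∧ b < M := fun b hb => ⟨hA b (mem_insert_of_mem hb), hMB b hb⟩
    have hMB' : M ∉ B := fun h => (hMB M h).false
    rw [card_insert_of_notMem hMB'] at hm ⊢
    rcases hm.eq_or_lt with rfl | hm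
    · rw [Nat.add_sub_cancel, mul_comm] at hmα
      have hBr : (#B + 1) * r = r * #B + r := by ring
      have hD : r * #B + (α - r * #B) = α := by omega
      have hv : (r : ℤ) * ∑ b ∈ B, b + ((α - r * #B : ℕ) : ℤ) * M ∈
          SubseqSums r (insert M B) α := by
        simpa only [hD] using add_mul_mem_insert (r := r) (d := α - r * #B) hMB'
          (by omega) (mul_sum_mem r B)
      have key := ncard_add_le_ncard_insert hB hD.ge (Set.singleton_subset_iff.2 hv)
        fun x hx => (Set.mem_singleton_iff.1 hx).le
      rw [Set.ncard_singleton] at key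
      have hcount : r - (α - r * #B) = r * #B + r - α := by omega
      calc _ = 1 + (r - (α - r * #B)) * #B := by
              rw [Ico_self, sum_empty, Nat.add_sub_cancel, hBr, hcount]
              ring
        _ ≤ _ := key
    · have key := ncard_add_le_ncard_insert hB (r := r) (α := α) (D := 0)
        (by nlinarith) (mono (subset_insert M B)) fun x hx => by
          simpa using le_mul_sum (fun b hb => (hB b hb).1) hx
      have := ih (fun a ha => hA a (mem_insert_of_mem ha)) (by omega)
      rw [Nat.sub_zero] at key
      rw [sum_Ico_succ_top (by omega), mul_add]
      omega

end SubseqSums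

theorem stmt_18_general (k r α m : ℕ) (A : Finset ℤ)
    (hmk : m ≤ k) (hmα : (m - 1) * r ≤ α) (hαm : α < m * r)
    (hAcard : A.card = k) (hAnonneg : ∀ a ∈ A, 0 ≤ a) :
    r * k * (k - 1) / 2 - r * m * (m - 1) / 2 + (m - 1) * (m * r - α) + 1
      ≤ (SubseqSums r A α).ncard := by
  subst hAcard
  rw [← mul_sum_Ico_id r hmk]
  exact SubseqSums.le_ncard_of_le_card hmα hαm hAnonneg hmk

theorem stmt_18 (k r α m : ℕ) (A : Finset ℤ)
    (hk : 4 ≤ k) (hr : 1 ≤ r) (hα1 : 1 ≤ α) (hαkr : α < k * r)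
    (hm1 : 1 ≤ m) (hmk : m ≤ k) (hmα : (m - 1) * r ≤ α) (hαm : α < m * r)
    (hAcard : A.card = k) (hAnonneg : ∀ a ∈ A, 0 ≤ a) (h0A : (0 : ℤ) ∈ A) :
    r * k * (k - 1) / 2 - r * m * (m - 1) / 2 + (m - 1) * (m * r - α) + 1
      ≤ (SubseqSums r A α).ncard :=
  stmt_18_general k r α m A hmk hmα hαm hAcard hAnonneg
end

section
/- Let k ≥ 7, r ≥ 1 and α be integers with 1 ≤ α ≤ kr − 2, and let m ∈ [1,k] be the integer such that (m−1)r ≤ α < mr. Let A = {a_1 < a_2 < ⋯ < a_k} be a set of k positive integers. If |Σ_α(𝔸)| = r·k·(k+1)/2 − r·m·(m+1)/2 + m·(mr − α) + 1, where 𝔸 = (a_1,…,a_k)_r, then A = d∗[1,k] for some positive integer d. -/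
/-!
Let `b` be the increasing enumeration of `A` and `β = kr - α`. Through `λ ↦ r - λ`, the set
`Σ_α(𝔸)` is a reflection of the set of values `∑ μᵢ bᵢ` of the multiplicity vectors `μ ≤ r`
with `∑ μᵢ ≤ β`. Grade such a `μ` by its level `∑ μᵢ (i + 1)`, its value for `A = [1, k]`.
Moving one unit of `μ` an index down, or removing a unit at the bottom index, lowers the level
by one and strictly lowers the value. Dually, unless `μ` is the extremal vector
`(0, …, 0, c, r, …, r)` of level `B = rk(k+1)/2 - rm(m+1)/2 + m(mr - α)`, a unit can be moved
an index up or added at the bottom. Hence below and above `μ` there are at least `level μ` and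
`B - level μ` further values, so if `|Σ_α(𝔸)| = B + 1` then vectors of equal level have equal
value. Comparing `b₁ + bⱼ` with `bⱼ₊₁`, and `b₁ + b₄` with `b₂ + b₃`, gives `bᵢ = i b₁`.
-/

open Finset

section Grading

variable {X β : Type*} [LinearOrder β] {S : Finset X} {f : X → β} {g : X → ℕ}

theorem le_card_filter_le_of_exists_pred
    (hpred : ∀ x ∈ S, 0 < g x → ∃ y ∈ S, g y + 1 = g x ∧ f y < f x) {x : X} (hx : x ∈ S) :
    g x + 1 ≤ #{v ∈ S.image f | v ≤ f x} := by
  induction hg : g x generalizing x with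
  | zero => exact card_pos.2 ⟨f x, mem_filter.2 ⟨mem_image_of_mem f hx, le_rfl⟩⟩
  | succ n ih =>
    obtain ⟨y, hy, hgy, hfy⟩ := hpred x hx (by omega)
    have hsub : {v ∈ S.image f | v ≤ f y} ⊆ {v ∈ S.image f | v ≤ f x} :=
      monotone_filter_right _ fun _ _ hv => hv.trans hfy.le
    have hssub : {v ∈ S.image f | v ≤ f y} ⊂ {v ∈ S.image f | v ≤ f x} :=
      (ssubset_iff_of_subset hsub).2
        ⟨f x, mem_filter.2 ⟨mem_image_of_mem f hx, le_rfl⟩, by simp [hfy]⟩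
    exact (ih hy (by omega)).trans_lt (card_lt_card hssub)

theorem le_card_filter_ge_of_exists_succ {N : ℕ}
    (hsucc : ∀ x ∈ S, g x < N → ∃ y ∈ S, g y = g x + 1 ∧ f x < f y) {x : X} (hx : x ∈ S) :
    N - g x + 1 ≤ #{v ∈ S.image f | f x ≤ v} :=
  le_card_filter_le_of_exists_pred (β := βᵒᵈ) (f := fun x => OrderDual.toDual (f x))
    (g := fun x => N - g x)
    (fun x hx hlt => (hsucc x hx (by omega)).imp fun y ⟨hy, hgy, hfy⟩ => ⟨hy, by omega, hfy⟩) hx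

theorem not_lt_of_card_image_le
    (hpred : ∀ x ∈ S, 0 < g x → ∃ y ∈ S, g y + 1 = g x ∧ f y < f x) {N : ℕ}
    (hsucc : ∀ x ∈ S, g x < N → ∃ y ∈ S, g y = g x + 1 ∧ f x < f y)
    (hcard : #(S.image f) ≤ N + 1) {x y : X} (hx : x ∈ S) (hy : y ∈ S) (hxy : g x = g y) :
    ¬ f x < f y := by
  intro hlt
  have hlow := le_card_filter_le_of_exists_pred hpred hx
  have hhigh := le_card_filter_ge_of_exists_succ hsucc hy
  have hsplit := card_filter_add_card_filter_not (s := S.image f) (· ≤ f x)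
  have hsub : {v ∈ S.image f | f y ≤ v} ⊆ {v ∈ S.image f | ¬ v ≤ f x} :=
    monotone_filter_right _ fun _ _ hv => not_le.2 (hlt.trans_le hv)
  have := card_le_card hsub
  omega

theorem eq_of_card_image_le
    (hpred : ∀ x ∈ S, 0 < g x → ∃ y ∈ S, g y + 1 = g x ∧ f y < f x) {N : ℕ}
    (hsucc : ∀ x ∈ S, g x < N → ∃ y ∈ S, g y = g x + 1 ∧ f x < f y)
    (hcard : #(S.image f) ≤ N + 1) {x y : X} (hx : x ∈ S) (hy : y ∈ S) (hxy : g x = g y) :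
    f x = f y :=
  le_antisymm (not_lt.1 (not_lt_of_card_image_le hpred hsucc hcard hy hx hxy.symm))
    (not_lt.1 (not_lt_of_card_image_le hpred hsucc hcard hx hy hxy))

end Grading

section Multiplicities

variable {ι : Type*} [Fintype ι] [DecidableEq ι] {r β : ℕ} {μ : ι → ℕ}

def multiplicities (ι : Type*) [Fintype ι] [DecidableEq ι] (r β : ℕ) : Finset (ι → ℕ) :=
  {μ ∈ Fintype.piFinset fun _ => range (r + 1) | ∑ i, μ i ≤ β}

@[simp]
theorem mem_multiplicities : μ ∈ multiplicities ι r β ↔ (∀ i, μ i ≤ r) ∧ ∑ i, μ i ≤ β := by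
  simp [multiplicities]

theorem single_mem_multiplicities (hr : 1 ≤ r) (hβ : 1 ≤ β) (p : ι) :
    Pi.single p 1 ∈ multiplicities ι r β := by
  refine mem_multiplicities.2 ⟨fun i => ?_, by simpa using hβ⟩
  rcases eq_or_ne i p with rfl | h <;> simp [*]

theorem single_add_single_mem_multiplicities (hr : 1 ≤ r) (hβ : 2 ≤ β) {p q : ι} (hpq : p ≠ q) :
    Pi.single p 1 + Pi.single q 1 ∈ multiplicities ι r β := by
  refine mem_multiplicities.2 ⟨fun i => ?_, by simpa [sum_add_distrib] using hβ⟩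
  simp only [Pi.add_apply, Pi.single_apply]
  split_ifs <;> simp_all

theorem add_single_mem_multiplicities (hμ : μ ∈ multiplicities ι r β) {p : ι} (hp : μ p < r)
    (hsum : ∑ i, μ i < β) : μ + Pi.single p 1 ∈ multiplicities ι r β := by
  rw [mem_multiplicities] at hμ ⊢
  refine ⟨fun i => ?_, by simpa [sum_add_distrib] using hsum⟩
  rcases eq_or_ne i p with rfl | h
  · simpa using hp
  · simpa [h] using hμ.1 i

theorem exists_add_single_eq (hμ : μ ∈ multiplicities ι r β) {p : ι} (hp : μ p ≠ 0) :
    ∃ ν ∈ multiplicities ι r β, ν + Pi.single p 1 = μ := by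
  rw [mem_multiplicities] at hμ
  refine ⟨μ - Pi.single p 1, mem_multiplicities.2 ⟨fun i => tsub_le_self.trans (hμ.1 i),
    (sum_le_sum fun i _ => tsub_le_self).trans hμ.2⟩, tsub_add_cancel_of_le fun i => ?_⟩
  rcases eq_or_ne i p with rfl | h <;> simp [*, Nat.one_le_iff_ne_zero]

theorem exists_add_single_eq_add_single (hμ : μ ∈ multiplicities ι r β) {p q : ι}
    (hp : μ p ≠ 0) (hq : μ q < r) :
    ∃ ν ∈ multiplicities ι r β, ν + Pi.single p 1 = μ + Pi.single q 1 := by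
  obtain ⟨ν, hν, rfl⟩ := exists_add_single_eq hμ hp
  have hνq : ν q < r := lt_of_le_of_lt (by simp) hq
  have hsum : ∑ i, ν i < β := by
    have := (mem_multiplicities.1 hμ).2
    simp only [Pi.add_apply, sum_add_distrib, Fintype.sum_pi_single'] at this
    omega
  exact ⟨ν + Pi.single q 1, add_single_mem_multiplicities hν hνq hsum, add_right_comm _ _ _⟩

theorem linearCombination_add_single_eq {M : Type*} [AddCommMonoid M] (w : ι → M)
    {μ ν : ι → ℕ} {p q : ι} (h : ν + Pi.single p 1 = μ + Pi.single q 1) :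
    Fintype.linearCombination ℕ w ν + w p = Fintype.linearCombination ℕ w μ + w q := by
  simpa using congrArg (Fintype.linearCombination ℕ w) h

end Multiplicities

section Reflection

variable {ι : Type*} [Fintype ι] {b : ι → ℤ} {r α : ℕ}

theorem subseqSums_image_univ (hb : Function.Injective b) :
    SubseqSums r (univ.image b) α =
      Fintype.linearCombination ℕ b '' {lam | (∀ i, lam i ≤ r) ∧ α ≤ ∑ i, lam i} := by
  ext x
  simp only [SubseqSums, Set.mem_ofPred_eq, Set.mem_image, sum_image fun _ _ _ _ h => hb h,
    Fintype.linearCombination_apply, nsmul_eq_mul]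
  constructor
  · rintro ⟨lam, hr, -, hα, rfl⟩
    exact ⟨lam ∘ b, ⟨fun i => hr _, hα⟩, rfl⟩
  · rintro ⟨lam, ⟨hr, hα⟩, rfl⟩
    refine ⟨Function.extend b lam 0, fun a => ?_, fun a ha => ?_,
      by simpa [hb.extend_apply], by simp [hb.extend_apply]⟩
    · by_cases h : ∃ i, b i = a
      · obtain ⟨i, rfl⟩ := h
        simpa [hb.extend_apply] using hr i
      · simp [Function.extend_apply' _ _ _ h]
    · exact Function.extend_apply' _ _ _ fun ⟨i, hi⟩ => ha (by simp [← hi])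

theorem ncard_subseqSums_image_univ [DecidableEq ι] (hb : Function.Injective b)
    (hα : α ≤ Fintype.card ι * r) :
    (SubseqSums r (univ.image b) α).ncard =
      #((multiplicities ι r (Fintype.card ι * r - α)).image (Fintype.linearCombination ℕ b)) := by
  set L := Fintype.linearCombination ℕ b
  have hcompl : ∀ lam : ι → ℕ, (∀ i, lam i ≤ r) →
      L ((fun _ => r) - lam) + L lam = L (fun _ => r) ∧
        ∑ i, ((fun _ => r) - lam : ι → ℕ) i + ∑ i, lam i = Fintype.card ι * r := fun lam h => by
    have h' : ((fun _ => r) - lam) + lam = fun _ => r := tsub_add_cancel_of_le h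
    refine ⟨by rw [← map_add, h'], ?_⟩
    rw [← sum_add_distrib]
    simp_rw [← Pi.add_apply, h']
    simp
  have himage : SubseqSums r (univ.image b) α =
      (L (fun _ => r) - ·) '' ↑((multiplicities ι r (Fintype.card ι * r - α)).image L) := by
    rw [subseqSums_image_univ hb, coe_image, Set.image_image]
    ext x
    simp only [Set.mem_image, Set.mem_ofPred_eq, mem_coe, mem_multiplicities]
    constructor
    · rintro ⟨lam, ⟨hr, hα'⟩, rfl⟩
      obtain ⟨hL, hsum⟩ := hcompl lam hr
      exact ⟨(fun _ => r) - lam, ⟨fun i => Nat.sub_le _ _, by omega⟩, by rw [← hL]; ring⟩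
    · rintro ⟨μ, ⟨hr, hβ⟩, rfl⟩
      obtain ⟨hL, hsum⟩ := hcompl μ hr
      exact ⟨(fun _ => r) - μ, ⟨fun i => Nat.sub_le _ _, by omega⟩, by rw [← hL]; ring⟩
  rw [himage, Set.ncard_image_of_injective _ sub_right_injective, Set.ncard_coe_finset]

end Reflection

def level {k : ℕ} : (Fin k → ℕ) →ₗ[ℕ] ℕ := Fintype.linearCombination ℕ fun i => (i : ℕ) + 1

@[simp]
theorem level_single {k : ℕ} (i : Fin k) : level (Pi.single i 1) = i + 1 := by
  simp [level]

section Extremal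

def extremal (r c t i : ℕ) : ℕ := if i < t then 0 else if i = t then c else r

variable {r c t i : ℕ}

theorem extremal_of_lt (h : i < t) : extremal r c t i = 0 := if_pos h

@[simp]
theorem extremal_self : extremal r c t t = c := by simp [extremal]

theorem extremal_of_gt (h : t < i) : extremal r c t i = r := by
  simp [extremal, h.not_gt, h.ne']

theorem sum_range_extremal {N : ℕ} (hN : t < N) :
    ∑ i ∈ range N, extremal r c t i = c + (N - 1 - t) * r := by
  induction N, hN using Nat.le_induction with
  | base => simp [sum_range_succ, sum_eq_zero fun i hi => extremal_of_lt (mem_range.1 hi)]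
  | succ N hN ih =>
    rw [sum_range_succ, ih, extremal_of_gt hN, show N + 1 - 1 - t = N - 1 - t + 1 by omega]
    ring

theorem two_mul_sum_range_extremal_mul {N : ℕ} (hN : t < N) :
    2 * ∑ i ∈ range N, extremal r c t i * (i + 1) + r * ((t + 1) * (t + 2)) =
      2 * c * (t + 1) + r * (N * (N + 1)) := by
  induction N, hN using Nat.le_induction with
  | base =>
    have h0 : ∑ i ∈ range t, extremal r c t i * (i + 1) = 0 :=
      sum_eq_zero fun i hi => by rw [extremal_of_lt (mem_range.1 hi), zero_mul]
    rw [sum_range_succ, h0, extremal_self, Nat.succ_eq_add_one]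
    ring
  | succ N hN ih =>
    rw [sum_range_succ, extremal_of_gt hN]
    nlinarith [ih]

theorem sum_extremal {n : ℕ} (ht : t ≤ n) :
    ∑ i : Fin (n + 1), extremal r c t i = c + (n - t) * r := by
  rw [Fin.sum_univ_eq_sum_range (extremal r c t), sum_range_extremal (by omega)]
  simp

theorem level_extremal {k m : ℕ} (hm : 1 ≤ m) (hmk : m ≤ k) :
    level (fun i : Fin k => extremal r c (m - 1) i) =
      r * k * (k + 1) / 2 - r * m * (m + 1) / 2 + m * c := by
  have h := two_mul_sum_range_extremal_mul (r := r) (c := c) (show m - 1 < k by omega)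
  rw [show m - 1 + 1 = m by omega, show m - 1 + 2 = m + 1 by omega] at h
  simp only [level, Fintype.linearCombination_apply, smul_eq_mul]
  rw [Fin.sum_univ_eq_sum_range (fun i => extremal r c (m - 1) i * (i + 1))]
  obtain ⟨u, hu⟩ := Nat.even_mul_succ_self m
  have hle : r * m * (m + 1) ≤ r * k * (k + 1) :=
    Nat.mul_le_mul (Nat.mul_le_mul_left r hmk) (by omega)
  have hru : r * m * (m + 1) = 2 * (r * u) := by rw [mul_assoc, hu]; ring
  rw [hru, mul_assoc r k] at hle ⊢
  rw [hu] at h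
  generalize ∑ i ∈ range k, extremal r c (m - 1) i * (i + 1) = L at h ⊢
  have : 2 * L + 2 * (r * u) = 2 * (m * c) + r * (k * (k + 1)) := by linarith
  omega

end Extremal

theorem exists_first_ne_zero {ι : Type*} [LinearOrder ι] [WellFoundedLT ι] {μ : ι → ℕ}
    (h : μ ≠ 0) : ∃ s, μ s ≠ 0 ∧ ∀ j < s, μ j = 0 := by
  obtain ⟨s, hs, hmin⟩ := wellFounded_lt.has_min {s | μ s ≠ 0} (Function.ne_iff.1 h)
  exact ⟨s, hs, fun j hj => by_contra fun hj' => hmin j hj' hj⟩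

theorem eq_of_add_mul_eq {r c c' u u' : ℕ} (hc : 1 ≤ c) (hcr : c ≤ r) (hc' : 1 ≤ c')
    (hc'r : c' ≤ r) (h : c + u * r = c' + u' * r) : c = c' ∧ u = u' := by
  obtain rfl : u = u' := by
    rcases lt_trichotomy u u' with h' | h' | h'
    · nlinarith
    · exact h'
    · nlinarith
  exact ⟨by omega, rfl⟩

section Moves

variable {n r β : ℕ} {b : Fin (n + 1) → ℤ} {μ : Fin (n + 1) → ℕ}

theorem exists_level_pred (hb : StrictMono b) (hb0 : 0 < b 0)
    (hμ : μ ∈ multiplicities (Fin (n + 1)) r β) (hlevel : 0 < level μ) :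
    ∃ ν ∈ multiplicities (Fin (n + 1)) r β, level ν + 1 = level μ ∧
      Fintype.linearCombination ℕ b ν < Fintype.linearCombination ℕ b μ := by
  obtain ⟨s, hs, hmin⟩ := exists_first_ne_zero fun h : μ = 0 => by simp [h] at hlevel
  rcases Fin.eq_zero_or_eq_succ s with rfl | ⟨i, rfl⟩
  · obtain ⟨ν, hν, h⟩ := exists_add_single_eq hμ hs
    refine ⟨ν, hν, by simpa using congrArg level h, ?_⟩
    have hv : Fintype.linearCombination ℕ b ν + b 0 = Fintype.linearCombination ℕ b μ := by
      simpa using congrArg (Fintype.linearCombination ℕ b) h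
    linarith
  · have hr : μ i.castSucc < r := by
      have := (mem_multiplicities.1 hμ).1 i.succ
      rw [hmin _ i.castSucc_lt_succ]
      omega
    obtain ⟨ν, hν, h⟩ := exists_add_single_eq_add_single hμ hs hr
    have hl : level ν + (i.succ + 1) = level μ + (i.castSucc + 1) :=
      linearCombination_add_single_eq _ h
    have hv := linearCombination_add_single_eq b h
    rw [Fin.val_succ, Fin.val_castSucc] at hl
    exact ⟨ν, hν, by omega, by linarith [hb i.castSucc_lt_succ]⟩

theorem eq_extremal_of_forall_succ_eq {c t : ℕ} (hc : 1 ≤ c) (hcr : c ≤ r) (ht : t ≤ n)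
    (hβ : c + (n - t) * r = β) (hμ : μ ∈ multiplicities (Fin (n + 1)) r β)
    (hshift : ∀ i : Fin n, μ i.castSucc ≠ 0 → μ i.succ = r) (hfull : μ 0 < r → ∑ i, μ i = β) :
    μ = fun i : Fin (n + 1) => extremal r c t i := by
  obtain ⟨hμr, hμβ⟩ := mem_multiplicities.1 hμ
  obtain ⟨s, hs, hmin⟩ := exists_first_ne_zero fun h : μ = 0 => by
    have := hfull (by simp only [h, Pi.zero_apply]; omega)
    simp only [h, Pi.zero_apply, sum_const_zero] at this
    omega
  have hr : r ≠ 0 := fun h => hs (Nat.le_zero.1 (h ▸ hμr s))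
  have habove : ∀ j, s < j → μ j = r := by
    intro j
    induction j using Fin.induction with
    | zero => exact fun h => absurd h (Fin.not_lt_zero s)
    | succ i ih =>
      intro hsi
      rcases (Fin.le_castSucc_iff.2 hsi).eq_or_lt with h | h
      · exact hshift i (h ▸ hs)
      · exact hshift i (by rw [ih h]; exact hr)
  have hshape : μ = fun i : Fin (n + 1) => extremal r (μ s) s i := by
    funext j
    rcases lt_trichotomy j s with h | rfl | h
    · rw [extremal_of_lt h, hmin j h]
    · simp
    · rw [extremal_of_gt h, habove j h]
  have hsum : μ s + (n - s) * r = β := by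
    have h : ∑ i, μ i = μ s + (n - s) * r := by
      conv_lhs => rw [hshape]
      exact sum_extremal (Nat.lt_succ_iff.1 s.isLt)
    rcases (hμr 0).lt_or_eq with h0 | h0
    · rw [← h, hfull h0]
    · obtain rfl : s = 0 := by
        by_contra hs0
        have := hmin 0 (Fin.pos_iff_ne_zero.2 hs0)
        omega
      have : (n - t) * r ≤ n * r := Nat.mul_le_mul_right _ (Nat.sub_le n t)
      simp only [Fin.val_zero, Nat.sub_zero] at h ⊢
      omega
  obtain ⟨hcs, hst⟩ := eq_of_add_mul_eq hc hcr (Nat.one_le_iff_ne_zero.2 hs) (hμr s)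
    (hβ.trans hsum.symm)
  rw [hshape, ← hcs, show (s : ℕ) = t by omega]

theorem exists_level_succ (hb : StrictMono b) (hb0 : 0 < b 0) {c t : ℕ} (hc : 1 ≤ c)
    (hcr : c ≤ r) (ht : t ≤ n) (hβ : c + (n - t) * r = β)
    (hμ : μ ∈ multiplicities (Fin (n + 1)) r β)
    (hlt : level μ < level (fun i : Fin (n + 1) => extremal r c t i)) :
    ∃ ν ∈ multiplicities (Fin (n + 1)) r β, level ν = level μ + 1 ∧
      Fintype.linearCombination ℕ b μ < Fintype.linearCombination ℕ b ν := by
  by_contra! hstuck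
  have hshift : ∀ i : Fin n, μ i.castSucc ≠ 0 → μ i.succ = r := by
    intro i hi
    by_contra hne
    obtain ⟨ν, hν, h⟩ := exists_add_single_eq_add_single hμ hi
      (lt_of_le_of_ne ((mem_multiplicities.1 hμ).1 _) hne)
    have hl : level ν + (i.castSucc + 1) = level μ + (i.succ + 1) :=
      linearCombination_add_single_eq _ h
    have hv := linearCombination_add_single_eq b h
    rw [Fin.val_succ, Fin.val_castSucc] at hl
    exact not_lt.2 (hstuck ν hν (by omega)) (by linarith [hb i.castSucc_lt_succ])
  have hfull : μ 0 < r → ∑ i, μ i = β := by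
    intro h0
    by_contra hne
    have hlt' := lt_of_le_of_ne (mem_multiplicities.1 hμ).2 hne
    exact not_lt.2 (hstuck _ (add_single_mem_multiplicities hμ h0 hlt') (by simp))
      (by simpa using hb0)
  exact hlt.ne (congrArg level (eq_extremal_of_forall_succ_eq hc hcr ht hβ hμ hshift hfull))

end Moves

theorem linearCombination_eq_of_level_eq {n r β c t : ℕ} {b : Fin (n + 1) → ℤ}
    (hb : StrictMono b) (hb0 : 0 < b 0) (hc : 1 ≤ c) (hcr : c ≤ r) (ht : t ≤ n)
    (hβ : c + (n - t) * r = β)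
    (hcard : #((multiplicities (Fin (n + 1)) r β).image (Fintype.linearCombination ℕ b)) ≤
      level (fun i : Fin (n + 1) => extremal r c t i) + 1)
    {μ ν : Fin (n + 1) → ℕ} (hμ : μ ∈ multiplicities (Fin (n + 1)) r β)
    (hν : ν ∈ multiplicities (Fin (n + 1)) r β) (h : level μ = level ν) :
    Fintype.linearCombination ℕ b μ = Fintype.linearCombination ℕ b ν :=
  eq_of_card_image_le (fun _ hx => exists_level_pred hb hb0 hx)
    (fun _ hx => exists_level_succ hb hb0 hc hcr ht hβ hx) hcard hμ hν h

theorem eq_mul_of_linearCombination_eq_of_level_eq {n r β : ℕ} (hn : 3 ≤ n) (hr : 1 ≤ r)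
    (hβ : 2 ≤ β) {b : Fin (n + 1) → ℤ}
    (hrigid : ∀ μ ∈ multiplicities (Fin (n + 1)) r β, ∀ ν ∈ multiplicities (Fin (n + 1)) r β,
      level μ = level ν → Fintype.linearCombination ℕ b μ = Fintype.linearCombination ℕ b ν)
    (i : Fin (n + 1)) : b i = ((i : ℕ) + 1 : ℤ) * b 0 := by
  have hsingle : ∀ i : Fin n, (i : ℕ) ≠ 0 → b 0 + b i.castSucc = b i.succ := fun i hi => by
    simpa using hrigid _ (single_add_single_mem_multiplicities hr hβ (p := 0) (q := i.castSucc)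
      (by simp [Fin.ext_iff, Ne.symm hi]))
      _ (single_mem_multiplicities hr (by omega) i.succ)
      (by simp only [map_add, level_single, Fin.val_zero, Fin.val_castSucc, Fin.val_succ]; omega)
  have hstep : ∀ i : Fin n, b i.succ = b i.castSucc + b 0 := by
    intro i
    rcases eq_or_ne (i : ℕ) 0 with hi | hi
    · have h0312 : b 0 + b ⟨3, by omega⟩ = b ⟨1, by omega⟩ + b ⟨2, by omega⟩ := by
        simpa using hrigid _ (single_add_single_mem_multiplicities hr hβ (p := 0)
          (q := ⟨3, by omega⟩) (by simp [Fin.ext_iff]))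
          _ (single_add_single_mem_multiplicities hr hβ (p := ⟨1, by omega⟩)
          (q := ⟨2, by omega⟩) (by simp [Fin.ext_iff])) (by simp)
      have h023 := hsingle ⟨2, by omega⟩ (by simp)
      simp only [Fin.castSucc_mk, Fin.succ_mk] at h023
      rw [show i.succ = ⟨1, by omega⟩ from Fin.ext (by simp [hi]),
        show i.castSucc = 0 from Fin.ext (by simp [hi])]
      linarith
    · rw [← hsingle i hi, add_comm]
  induction i using Fin.induction with
  | zero => simp
  | succ i ih =>
    rw [hstep, ih, Fin.val_succ, Fin.val_castSucc]
    push_cast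
    ring

theorem image_univ_eq_image_Icc {n : ℕ} {b : Fin (n + 1) → ℤ} {d : ℤ}
    (hb : ∀ i, b i = ((i : ℕ) + 1 : ℤ) * d) :
    univ.image b = (Icc (1 : ℤ) ((n + 1 : ℕ) : ℤ)).image (d * ·) := by
  ext x
  simp only [mem_image, mem_univ, true_and, mem_Icc, hb]
  constructor
  · rintro ⟨i, rfl⟩
    exact ⟨(i : ℕ) + 1, ⟨by omega, by have := i.isLt; omega⟩, by ring⟩
  · rintro ⟨j, ⟨h1, h2⟩, rfl⟩
    refine ⟨⟨(j - 1).toNat, by omega⟩, ?_⟩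
    rw [Int.toNat_of_nonneg (by omega)]
    ring

theorem mul_sub_le_and_add_mul_eq {n r m α : ℕ} (hm1 : 1 ≤ m) (hmk : m ≤ n + 1)
    (hmα : (m - 1) * r ≤ α) (hαm : α < m * r) :
    m * r - α ≤ r ∧ (m * r - α) + (n - (m - 1)) * r = (n + 1) * r - α := by
  have h1 : (m - 1) * r + r = m * r := by rw [← Nat.succ_mul]; congr 1; omega
  have h2 : (n - (m - 1)) * r + m * r = (n + 1) * r := by rw [← add_mul]; congr 1; omega
  omega

theorem stmt_19_general (k r α m : ℕ) (A : Finset ℤ)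
    (hk : 7 ≤ k) (hr : 1 ≤ r) (hαkr : α ≤ k * r - 2)
    (hm1 : 1 ≤ m) (hmk : m ≤ k) (hmα : (m - 1) * r ≤ α) (hαm : α < m * r)
    (hAcard : A.card = k) (hApos : ∀ a ∈ A, 0 < a)
    (heq : (SubseqSums r A α).ncard = r * k * (k + 1) / 2 - r * m * (m + 1) / 2 + m * (m * r - α) + 1) :
    ∃ d : ℤ, 0 < d ∧ A = (Finset.Icc (1 : ℤ) (k : ℤ)).image (fun i => d * i) := by
  obtain ⟨n, rfl⟩ : ∃ n, k = n + 1 := ⟨k - 1, by omega⟩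
  set b := A.orderEmbOfFin hAcard
  have hA : A = univ.image b := by
    rw [← coe_inj, coe_image, coe_univ, Set.image_univ, range_orderEmbOfFin]
  have hb0 : 0 < b 0 := hApos _ (A.orderEmbOfFin_mem hAcard 0)
  obtain ⟨hcr, hβ⟩ := mul_sub_le_and_add_mul_eq hm1 hmk hmα hαm
  have hcard : #((multiplicities (Fin (n + 1)) r ((n + 1) * r - α)).image
      (Fintype.linearCombination ℕ b)) =
        level (fun i : Fin (n + 1) => extremal r (m * r - α) (m - 1) i) + 1 := by
    have h := ncard_subseqSums_image_univ (r := r) (α := α) b.injective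
      (by rw [Fintype.card_fin]; omega)
    rw [Fintype.card_fin] at h
    rw [← h, ← hA, heq, level_extremal hm1 hmk]
  have hkr : n + 1 ≤ (n + 1) * r := Nat.le_mul_of_pos_right _ hr
  have hAP := eq_mul_of_linearCombination_eq_of_level_eq (by omega : 3 ≤ n) hr
    (by omega : 2 ≤ (n + 1) * r - α) fun μ hμ ν hν h =>
      linearCombination_eq_of_level_eq b.strictMono hb0 (by omega) hcr (by omega) hβ hcard.le
        hμ hν h
  exact ⟨b 0, hb0, hA.trans (image_univ_eq_image_Icc hAP)⟩

theorem stmt_19 (k r α m : ℕ) (A : Finset ℤ)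
    (hk : 7 ≤ k) (hr : 1 ≤ r) (hα1 : 1 ≤ α) (hαkr : α ≤ k * r - 2)
    (hm1 : 1 ≤ m) (hmk : m ≤ k) (hmα : (m - 1) * r ≤ α) (hαm : α < m * r)
    (hAcard : A.card = k) (hApos : ∀ a ∈ A, 0 < a)
    (heq : (SubseqSums r A α).ncard = r * k * (k + 1) / 2 - r * m * (m + 1) / 2 + m * (m * r - α) + 1) :
    ∃ d : ℤ, 0 < d ∧ A = (Finset.Icc (1 : ℤ) (k : ℤ)).image (fun i => d * i) :=
  stmt_19_general k r α m A hk hr hαkr hm1 hmk hmα hαm hAcard hApos heq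
end
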